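/- If a set 𝒯 of binary phylogenetic trees on n taxa is co-displayed in a binary tree-child network, then the number of distinct 3-subtrees occurring in 𝒯 is at most 2(2n−3)(n−2) = O(n²); and this quadratic bound is asymptotically tight, since there exists a tree-child network on n taxa displaying at least (n−2)(n−3) distinct 3-subtrees. -/

import Mathlib

/-- A rooted, leaf-labeled digraph: a candidate phylogenetic network on taxon set `X`. -/
structure Net (V : Type) (X : Type) where
  E : V → V → Prop
  root : V
  leaf : X → V

namespace Net

variable {V X : Type}

/-- Indegree of a vertex. -/
noncomputable def inDeg (N : Net V X) (v : V) : ℕ := {u | N.E u v}.ncard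

/-- Outdegree of a vertex. -/
noncomputable def outDeg (N : Net V X) (v : V) : ℕ := {w | N.E v w}.ncard

def IsLeaf (N : Net V X) (v : V) : Prop := N.outDeg v = 0

/-- A tree node: indegree at most one. -/
def IsTreeNode (N : Net V X) (v : V) : Prop := N.inDeg v ≤ 1

/-- A reticulate node: indegree two (or more, in the non-binary case: indegree ≥ 2). -/
def IsRet (N : Net V X) (v : V) : Prop := 2 ≤ N.inDeg v

def Acyclic (N : Net V X) : Prop := ∀ v, ¬ Relation.TransGen N.E v v

/-- Common well-formedness conditions of a rooted phylogenetic network: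
acyclic, rooted, every node reachable from the root, leaves bijectively labeled by `X`. -/
structure IsPhylo (N : Net V X) : Prop where
  acyclic : N.Acyclic
  rootIn : N.inDeg N.root = 0
  reach : ∀ v, Relation.ReflTransGen N.E N.root v
  leafInj : Function.Injective N.leaf
  leafIsLeaf : ∀ x, N.IsLeaf (N.leaf x)
  leafSurj : ∀ v, N.IsLeaf v → ∃ x, N.leaf x = v
  leafIn : ∀ x, N.inDeg (N.leaf x) = 1

/-- A binary phylogenetic network: every non-leaf node is either a tree node
(indegree ≤ 1, outdegree 2) or a reticulate node (indegree 2, outdegree 1). -/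
structure IsBinaryNet (N : Net V X) extends IsPhylo N : Prop where
  deg : ∀ v, ¬ N.IsLeaf v →
    (N.inDeg v ≤ 1 ∧ N.outDeg v = 2) ∨ (N.inDeg v = 2 ∧ N.outDeg v = 1)

/-- Tree-child property: every non-leaf node has a child that is a tree node. -/
def TreeChild (N : Net V X) : Prop :=
  ∀ v, ¬ N.IsLeaf v → ∃ w, N.E v w ∧ N.IsTreeNode w

/-- A binary phylogenetic tree: a binary phylogenetic network without reticulate nodes. -/
def IsBinaryTree (N : Net V X) : Prop := N.IsBinaryNet ∧ ∀ v, N.inDeg v ≤ 1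

/-- A tree edge: an edge entering a tree node. -/
def TreeEdge (N : Net V X) (u v : V) : Prop := N.E u v ∧ N.IsTreeNode v

/-- The tree component rooted at `x`: all nodes reachable from `x` via tree edges. -/
def comp (N : Net V X) (x : V) : Set V := {v | Relation.ReflTransGen N.TreeEdge x v}

/-- `u` and `v` lie in a common tree component. -/
def InSameComp (N : Net V X) (u v : V) : Prop :=
  ∃ x, (x = N.root ∨ N.IsRet x) ∧ u ∈ N.comp x ∧ v ∈ N.comp x

/-- The taxa `x` and `y` form a cherry: their leaves share a common parent. -/
def HasCherry (N : Net V X) (x y : X) : Prop :=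
  x ≠ y ∧ ∃ p, N.E p (N.leaf x) ∧ N.E p (N.leaf y)

/-- The set of cherries of a tree, as unordered pairs of taxa. -/
def cherries (N : Net V X) : Set (Sym2 X) :=
  {p | ∃ x y, p = s(x, y) ∧ N.HasCherry x y}

/-- The tree has the 3-subtree `((a,b),c)`: a node whose two children are the leaf `c`
and the parent of the cherry `(a,b)`. -/
def Has3Subtree (N : Net V X) (a b c : X) : Prop :=
  a ≠ b ∧ a ≠ c ∧ b ≠ c ∧
  ∃ v p, N.E v p ∧ N.E v (N.leaf c) ∧ N.E p (N.leaf a) ∧ N.E p (N.leaf b)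

def IsAncestor (N : Net V X) (u v : V) : Prop := Relation.ReflTransGen N.E u v

/-- `l` is the least common ancestor of `u` and `v`. -/
def IsLCA (N : Net V X) (l u v : V) : Prop :=
  N.IsAncestor l u ∧ N.IsAncestor l v ∧
  ∀ w, N.IsAncestor w u → N.IsAncestor w v → N.IsAncestor w l

end Net

/-- Paths in `S` from `a` to `b` whose vertices other than `a` and `b` avoid the set `A`. -/
def pathAvoid {V : Type} (S : V → V → Prop) (A : Set V) (a b : V) : Prop :=
  Relation.ReflTransGen (fun u v => S u v ∧ (v = b ∨ v ∉ A)) a b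

/-- `T` is displayed in `N`: `N` contains a subdivision of `T` preserving the leaf labels,
i.e. `T` is obtained from `N` by deleting all but one incoming edge at each reticulate node,
pruning nodes without labeled leaf descendants, and suppressing degree-two nodes. -/
def Display {VT V X : Type} (T : Net VT X) (N : Net V X) : Prop :=
  ∃ (S : V → V → Prop) (φ : VT → V),
    (∀ u v, S u v → N.E u v) ∧
    Function.Injective φ ∧
    (∀ x, φ (T.leaf x) = N.leaf x) ∧
    (∀ a b, T.E a b → pathAvoid S (Set.range φ) (φ a) (φ b)) ∧
    (∀ a : VT, {w | S (φ a) w}.ncard = T.outDeg a ∧ {u | S u (φ a)}.ncard = T.inDeg a) ∧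
    (∀ v : V, v ∉ Set.range φ → ((∃ u, S u v) ∨ (∃ w, S v w)) →
      {w | S v w}.ncard = 1 ∧ {u | S u v}.ncard = 1)

/-- `N` displays the cherry `(x, y)`: some binary tree displayed in `N` has `(x,y)` as a cherry. -/
def DisplaysCherry {V X : Type} (N : Net V X) (x y : X) : Prop :=
  ∃ (VT : Type) (T : Net VT X),
    Finite VT ∧ T.IsBinaryTree ∧ Display T N ∧ T.HasCherry x y

/-- `N` displays the 3-subtree `((a,b),c)`. -/
def Displays3Subtree {V X : Type} (N : Net V X) (a b c : X) : Prop :=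
  ∃ (VT : Type) (T : Net VT X),
    Finite VT ∧ T.IsBinaryTree ∧ Display T N ∧ T.Has3Subtree a b c

/-- Isomorphism of leaf-labeled rooted digraphs. -/
def NetIso {V1 V2 X : Type} (N1 : Net V1 X) (N2 : Net V2 X) : Prop :=
  ∃ f : V1 ≃ V2, (∀ u v, N1.E u v ↔ N2.E (f u) (f v)) ∧
    f N1.root = N2.root ∧ ∀ x, f (N1.leaf x) = N2.leaf x

section Part1

set_option linter.unusedSectionVars false
open Relation Set

variable {V X : Type}

/-- Forced path from `u` to leaf `a`: at every vertex on the way, every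
alternative child is a reticulation. -/
inductive FP (N : Net V X) : V → X → Prop
  | leaf (a : X) : FP N (N.leaf a) a
  | step {u w : V} {a : X} (h1 : N.E u w)
      (h2 : ∀ w', N.E u w' → w' = w ∨ N.IsRet w') (h3 : FP N w a) : FP N u a

variable [Fintype V] [Fintype X] {N : Net V X}

lemma outDeg_pos_of_edge {u w : V} (h : N.E u w) : 0 < N.outDeg u := by
  rw [Net.outDeg, Set.ncard_pos (Set.toFinite _)]
  exact ⟨w, h⟩

lemma not_isLeaf_of_edge {u w : V} (h : N.E u w) : ¬ N.IsLeaf u := by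
  intro hl
  have := outDeg_pos_of_edge h
  rw [Net.IsLeaf] at hl
  omega

lemma leaf_no_edge (x : X) (hB : N.IsBinaryNet) {w : V} (h : N.E (N.leaf x) w) : False :=
  not_isLeaf_of_edge h (hB.leafIsLeaf x)

lemma not_ret_of_treeNode {w : V} (h : N.IsTreeNode w) : ¬ N.IsRet w := by
  rw [Net.IsTreeNode] at h; rw [Net.IsRet]; omega

lemma FP_cases {u : V} {a : X} (h : FP N u a) :
    u = N.leaf a ∨ ∃ w, N.E u w ∧ (∀ w', N.E u w' → w' = w ∨ N.IsRet w') ∧ FP N w a := by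
  cases h with
  | leaf => exact Or.inl rfl
  | step h1 h2 h3 => exact Or.inr ⟨_, h1, h2, h3⟩

lemma FP_unique (hB : N.IsBinaryNet) (hTC : N.TreeChild) {u : V} {a b : X}
    (ha : FP N u a) (hb : FP N u b) : a = b := by
  induction ha generalizing b with
  | leaf a =>
    rcases FP_cases hb with h | ⟨w, h1, _, _⟩
    · exact hB.leafInj h
    · exact absurd h1 (fun h => leaf_no_edge _ hB h)
  | step h1 h2 h3 ih =>
    rcases FP_cases hb with h | ⟨w', h1', h2', h3'⟩
    · exact absurd (h ▸ h1) (fun h => leaf_no_edge _ hB h)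
    · obtain ⟨t, ht, htt⟩ := hTC _ (not_isLeaf_of_edge h1)
      have e1 : t = _ := (h2 t ht).resolve_right (not_ret_of_treeNode htt)
      have e2 : t = w' := (h2' t ht).resolve_right (not_ret_of_treeNode htt)
      exact ih (e1 ▸ e2 ▸ h3')

/-- A vertex of `N` witnessing the cherry `(a,b)`. -/
def CherryAt (N : Net V X) (v : V) (a b : X) : Prop :=
  ∃ w1 w2, w1 ≠ w2 ∧ N.E v w1 ∧ N.E v w2 ∧ FP N w1 a ∧ FP N w2 b

lemma cherryAt_outDeg (hB : N.IsBinaryNet) {v : V} {a b : X}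
    (h : CherryAt N v a b) : N.outDeg v = 2 ∧ N.inDeg v ≤ 1 := by
  obtain ⟨w1, w2, hne, he1, he2, _, _⟩ := h
  have h2 : 2 ≤ N.outDeg v := by
    have : ({w1, w2} : Set V) ⊆ {w | N.E v w} := by
      rintro x (rfl | rfl) <;> assumption
    calc 2 = ({w1, w2} : Set V).ncard := (Set.ncard_pair hne).symm
    _ ≤ _ := Set.ncard_le_ncard this (Set.toFinite _)
  rcases hB.deg v (not_isLeaf_of_edge he1) with ⟨hi, ho⟩ | ⟨hi, ho⟩
  · exact ⟨ho, hi⟩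
  · omega

lemma cherryAt_unique (hB : N.IsBinaryNet) (hTC : N.TreeChild) {v : V} {a b a' b' : X}
    (h : CherryAt N v a b) (h' : CherryAt N v a' b') : s(a, b) = s(a', b') := by
  obtain ⟨w1, w2, hne, he1, he2, hf1, hf2⟩ := h
  obtain ⟨w1', w2', hne', he1', he2', hf1', hf2'⟩ := h'
  have hcard : N.outDeg v = 2 := (cherryAt_outDeg hB ⟨w1, w2, hne, he1, he2, hf1, hf2⟩).1
  have hset : ({w1, w2} : Set V) = {w | N.E v w} := by
    apply Set.eq_of_subset_of_ncard_le
    · rintro x (rfl | rfl) <;> assumption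
    · rw [← Net.outDeg, hcard, Set.ncard_pair hne]
    · exact Set.toFinite _
  have m1 : w1' ∈ ({w1, w2} : Set V) := hset ▸ he1'
  have m2 : w2' ∈ ({w1, w2} : Set V) := hset ▸ he2'
  rcases m1 with rfl | rfl
  · rcases m2 with rfl | rfl
    · exact absurd rfl hne'
    · rw [FP_unique hB hTC hf1' hf1, FP_unique hB hTC hf2' hf2]
  · rcases m2 with rfl | rfl
    · rw [FP_unique hB hTC hf1' hf2, FP_unique hB hTC hf2' hf1, Sym2.eq_swap]
    · exact absurd rfl hne'

end Part1
section Part1b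
open Relation Set
set_option linter.unusedSectionVars false

variable {V X : Type} [Fintype V] [Fintype X] {N : Net V X}

lemma pair_le_ncard {w1 w2 : V} {s : Set V} (h : w1 ≠ w2) (h1 : w1 ∈ s) (h2 : w2 ∈ s) :
    2 ≤ s.ncard := by
  calc 2 = ({w1, w2} : Set V).ncard := (Set.ncard_pair h).symm
  _ ≤ _ := Set.ncard_le_ncard (by rintro x (rfl | rfl) <;> assumption) (Set.toFinite _)

lemma unique_in {v u u' : V} (h : N.inDeg v ≤ 1) (e1 : N.E u v) (e2 : N.E u' v) : u = u' := by
  by_contra hne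
  have h2 := pair_le_ncard (s := {u | N.E u v}) hne e1 e2
  rw [Net.inDeg] at h; omega

lemma reach_leaf (hB : N.IsBinaryNet) (hTC : N.TreeChild) (v : V) :
    ∃ x, Relation.ReflTransGen N.TreeEdge v (N.leaf x) := by
  have it : IsTrans V fun a b : V => Relation.TransGen N.E b a :=
    ⟨fun a b c h1 h2 => h2.trans h1⟩
  have ii : IsIrrefl V fun a b : V => Relation.TransGen N.E b a :=
    ⟨fun a h => hB.acyclic a h⟩
  have wf : WellFounded (fun a b : V => Relation.TransGen N.E b a) :=
    Finite.wellFounded_of_trans_of_irrefl _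
  refine wf.induction (C := fun v => ∃ x, Relation.ReflTransGen N.TreeEdge v (N.leaf x)) v ?_
  intro v ih
  by_cases hv : N.IsLeaf v
  · obtain ⟨x, hx⟩ := hB.leafSurj v hv
    exact ⟨x, hx ▸ Relation.ReflTransGen.refl⟩
  · obtain ⟨w, hw, hwt⟩ := hTC v hv
    obtain ⟨x, hx⟩ := ih w (Relation.TransGen.single hw)
    exact ⟨x, Relation.ReflTransGen.head ⟨hw, hwt⟩ hx⟩

lemma back_lemma {S : V → V → Prop} (hSE : ∀ u v, S u v → N.E u v) {w ℓ : V}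
    (htp : Relation.ReflTransGen N.TreeEdge w ℓ) :
    ∀ {z : V}, Relation.ReflTransGen S z ℓ → (∃ u', S u' w) ∨ Relation.ReflTransGen N.E w z := by
  induction htp with
  | refl =>
    intro z hz
    rcases hz.cases_tail with rfl | ⟨y, _, hyw⟩
    · exact Or.inr Relation.ReflTransGen.refl
    · exact Or.inl ⟨y, hyw⟩
  | tail hwm hme ih =>
    rename_i m ℓ'
    intro z hz
    rcases hz.cases_tail with rfl | ⟨y, hzy, hyl⟩
    · exact Or.inr ((Relation.ReflTransGen.mono (fun _ _ h => h.1) _ _ hwm).tail hme.1)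
    · have : y = m := unique_in hme.2 (hSE _ _ hyl) hme.1
      exact ih (this ▸ hzy)

lemma extract (hB : N.IsBinaryNet) (hTC : N.TreeChild) {VT : Type} [hft : Finite VT]
    {T : Net VT X} (hT : T.IsBinaryTree) (hD : Display T N) {a b c : X}
    (h3 : T.Has3Subtree a b c) : ∃ v, CherryAt N v a b := by
  classical
  have : Fintype VT := Fintype.ofFinite VT
  obtain ⟨S, φ, hSE, hφinj, hφleaf, hpath, hdeg, hsupp⟩ := hD
  obtain ⟨hab, hac, hbc, vv, p, hvp, hvc, hEa, hEb⟩ := h3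
  -- the image of a T-path is an S-path
  have smap : ∀ t : VT, Relation.ReflTransGen S (φ T.root) (φ t) := by
    intro t
    induction hT.1.reach t with
    | refl => exact Relation.ReflTransGen.refl
    | tail _ e ih => exact ih.trans (Relation.ReflTransGen.mono (fun _ _ h => h.1) _ _ (hpath _ _ e))
  -- main forced-path extraction
  have key : ∀ (x : X) (u : V),
      Relation.ReflTransGen (fun u v => S u v ∧ (v = N.leaf x ∨ v ∉ Set.range φ)) u (N.leaf x) →
      (u = N.leaf x ∨ u ∉ Set.range φ) → Relation.ReflTransGen N.E (φ T.root) u →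
      (∃ pre, S pre u) → FP N u x := by
    intro x u hu
    induction hu using Relation.ReflTransGen.head_induction_on with
    | refl => intro _ _ _; exact FP.leaf x
    | head h' hrest ih =>
      rename_i u m
      intro hu hreach hpre
      have huE : N.E u m := hSE _ _ h'.1
      have hun : u ∉ Set.range φ := by
        rcases hu with rfl | h
        · exact absurd huE (fun h => leaf_no_edge _ hB h)
        · exact h
      obtain ⟨houtS, hinS⟩ := hsupp u hun (Or.inl hpre)
      have hstep : ∀ w', N.E u w' → w' = m ∨ N.IsRet w' := by
        intro w' hw'
        by_contra hcon
        push_neg at hcon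
        obtain ⟨hwm, hwr⟩ := hcon
        -- w' is a tree node
        have hS2 : ∀ u'', S u'' w' → False := by
          intro u'' hSu
          have hin : N.inDeg w' ≤ 1 := by
            by_cases hl : N.IsLeaf w'
            · obtain ⟨x', hx'⟩ := hB.leafSurj w' hl
              rw [← hx', hB.leafIn x']
            · rcases hB.deg w' hl with ⟨h1, _⟩ | ⟨h1, _⟩
              · exact h1
              · exact absurd (by rw [Net.IsRet, h1]) hwr
          have : u'' = u := unique_in hin (hSE _ _ hSu) hw'
          subst this
          have : 2 ≤ {w | S u'' w}.ncard := pair_le_ncard hwm hSu h'.1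
          omega
        by_cases hl : N.IsLeaf w'
        · -- labeled leaf: its unique in-edge must be an S-edge from u
          obtain ⟨x', hx'⟩ := hB.leafSurj w' hl
          have h1 : {u | S u (φ (T.leaf x'))}.ncard = 1 := by
            rw [(hdeg (T.leaf x')).2]; exact hT.1.leafIn x'
          obtain ⟨u'', hu''⟩ := Set.ncard_eq_one.mp h1
          have : u'' ∈ {u | S u (φ (T.leaf x'))} := hu'' ▸ rfl
          rw [hφleaf, hx'] at this
          exact hS2 u'' this
        · -- non-leaf tree node: use tree-child visibility
          have htn : N.IsTreeNode w' := by
            rcases hB.deg w' hl with ⟨h1, _⟩ | ⟨h1, _⟩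
            · exact h1
            · exact absurd (by rw [Net.IsRet, h1]) hwr
          obtain ⟨x'', htp⟩ := reach_leaf hB hTC w'
          have hsp : Relation.ReflTransGen S (φ T.root) (N.leaf x'') := by
            have := smap (T.leaf x'')
            rwa [hφleaf] at this
          rcases back_lemma hSE htp hsp with ⟨u', hu'⟩ | hback
          · have : u' = u := unique_in htn (hSE _ _ hu') hw'
            exact hS2 u' hu'
          · exact hB.acyclic u (Relation.TransGen.head' hw' (hback.trans hreach))
      exact FP.step huE hstep (ih h'.2 (hreach.tail huE) ⟨u, h'.1⟩)
  -- the two paths out of φ p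
  have hpne : ∀ x : X, T.E p (T.leaf x) → φ p ≠ N.leaf x := by
    intro x hx heq
    rw [← hφleaf x] at heq
    have := hφinj heq
    subst this
    exact leaf_no_edge _ hT.1 hx
  have getw : ∀ x : X, T.E p (T.leaf x) → ∃ w, S (φ p) w ∧ FP N w x ∧ N.E (φ p) w := by
    intro x hx
    have hp := hpath _ _ hx
    rw [pathAvoid, hφleaf] at hp
    rcases hp.cases_head with heq | ⟨w, hw, hrest⟩
    · exact absurd heq (hpne x hx)
    · refine ⟨w, hw.1, key x w hrest hw.2 ?_ ⟨φ p, hw.1⟩, hSE _ _ hw.1⟩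
      exact Relation.ReflTransGen.tail (Relation.ReflTransGen.mono (fun _ _ h => hSE _ _ h) _ _ (smap p)) (hSE _ _ hw.1)
  obtain ⟨w1, hS1, hF1, hE1⟩ := getw a hEa
  obtain ⟨w2, hS2, hF2, hE2⟩ := getw b hEb
  have hne : w1 ≠ w2 := by
    intro h
    exact hab (FP_unique hB hTC hF1 (h ▸ hF2))
  exact ⟨φ p, w1, w2, hne, hE1, hE2, hF1, hF2⟩

end Part1b
section Part1c
open Relation Set Finset
set_option linter.unusedSectionVars false

variable {V X : Type} [Fintype V] [Fintype X] {N : Net V X}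

lemma treePath_src_unique {a c : V} (h : Relation.ReflTransGen N.TreeEdge a c)
    (ha : ¬ N.IsTreeNode a) : ∀ {b : V}, Relation.ReflTransGen N.TreeEdge b c →
    ¬ N.IsTreeNode b → a = b := by
  induction h with
  | refl =>
    intro b hb hbt
    rcases hb.cases_tail with heq | ⟨d, hbd, hda⟩
    · exact heq
    · exact absurd hda.2 ha
  | tail hac' he ih =>
    intro b hb hbt
    rcases hb.cases_tail with heq | ⟨d, hbd, hdc⟩
    · exact absurd (heq ▸ he.2) hbt
    · have hd := unique_in he.2 hdc.1 he.1
      exact ih (hd ▸ hbd) hbt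

lemma root_not_leaf (hB : N.IsBinaryNet) : ¬ N.IsLeaf N.root := by
  intro h
  obtain ⟨x, hx⟩ := hB.leafSurj _ h
  have := hB.leafIn x
  rw [hx, hB.rootIn] at this
  omega

lemma count_main (hB : N.IsBinaryNet) (hTC : N.TreeChild) :
    {v : V | ¬ N.IsLeaf v ∧ N.inDeg v ≤ 1}.ncard + 1 ≤ 2 * Fintype.card X := by
  classical
  set LvF := Finset.univ.filter (fun v : V => N.IsLeaf v) with hLvF
  set ItF := Finset.univ.filter (fun v : V => ¬ N.IsLeaf v ∧ N.inDeg v ≤ 1) with hItF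
  set RtF := Finset.univ.filter (fun v : V => ¬ N.IsLeaf v ∧ ¬ N.inDeg v ≤ 1) with hRtF
  -- basic classification facts
  have hleaf_in : ∀ v, N.IsLeaf v → N.inDeg v = 1 := by
    intro v hv
    obtain ⟨x, hx⟩ := hB.leafSurj v hv
    rw [← hx]; exact hB.leafIn x
  have hret : ∀ v, ¬ N.IsLeaf v → ¬ N.inDeg v ≤ 1 → N.inDeg v = 2 ∧ N.outDeg v = 1 := by
    intro v h1 h2
    rcases hB.deg v h1 with ⟨hi, ho⟩ | h
    · omega
    · exact h
  have hit : ∀ v, ¬ N.IsLeaf v → N.inDeg v ≤ 1 → N.outDeg v = 2 := by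
    intro v h1 h2
    rcases hB.deg v h1 with ⟨hi, ho⟩ | ⟨hi, ho⟩
    · exact ho
    · omega
  -- indegree one for non-root vertices with indeg ≤ 1
  have hin1 : ∀ v, v ≠ N.root → 1 ≤ N.inDeg v := by
    intro v hv
    rcases (hB.reach v).cases_tail with heq | ⟨d, _, hdv⟩
    · exact absurd heq hv
    · have hne : ({u | N.E u v} : Set V).Nonempty := ⟨d, hdv⟩
      have := (Set.ncard_pos (Set.toFinite _)).mpr hne
      rw [Net.inDeg]; omega
  -- handshake
  have handshake : ∑ v, N.outDeg v = ∑ v, N.inDeg v := by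
    have h1 : ∀ v, N.outDeg v = ∑ u, if N.E v u then 1 else 0 := by
      intro v
      rw [Net.outDeg, Set.ncard_eq_toFinset_card', Set.toFinset_setOf, Finset.card_filter]
    have h2 : ∀ v, N.inDeg v = ∑ u, if N.E u v then 1 else 0 := by
      intro v
      rw [Net.inDeg, Set.ncard_eq_toFinset_card', Set.toFinset_setOf, Finset.card_filter]
    simp only [h1, h2]
    exact Finset.sum_comm
  -- split the sums by vertex class
  have hsplit : ∀ f : V → ℕ, ∑ v, f v = ∑ v ∈ LvF, f v + (∑ v ∈ ItF, f v + ∑ v ∈ RtF, f v) := by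
    intro f
    rw [← Finset.sum_filter_add_sum_filter_not Finset.univ (fun v => N.IsLeaf v) f]
    congr 1
    rw [← Finset.sum_filter_add_sum_filter_not (Finset.univ.filter (fun v => ¬ N.IsLeaf v))
      (fun v => N.inDeg v ≤ 1) f, Finset.filter_filter, Finset.filter_filter]
  have hout : ∑ v, N.outDeg v = 2 * ItF.card + RtF.card := by
    rw [hsplit (fun v => N.outDeg v)]
    have e1 : ∑ v ∈ LvF, N.outDeg v = 0 := by
      apply Finset.sum_eq_zero; intro v hv
      exact (Finset.mem_filter.mp hv).2
    have e2 : ∑ v ∈ ItF, N.outDeg v = 2 * ItF.card := by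
      rw [Finset.sum_congr rfl (fun v hv => hit v (Finset.mem_filter.mp hv).2.1
        (Finset.mem_filter.mp hv).2.2), Finset.sum_const, smul_eq_mul, mul_comm]
    have e3 : ∑ v ∈ RtF, N.outDeg v = RtF.card := by
      rw [Finset.sum_congr rfl (fun v hv => (hret v (Finset.mem_filter.mp hv).2.1
        (Finset.mem_filter.mp hv).2.2).2), Finset.sum_const, smul_eq_mul, mul_one]
    omega
  have hroot_it : N.root ∈ ItF := by
    rw [hItF, Finset.mem_filter]
    exact ⟨Finset.mem_univ _, root_not_leaf hB, by rw [hB.rootIn]; omega⟩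
  have hin : ∑ v, N.inDeg v + 1 = Fintype.card X + 2 * RtF.card + ItF.card := by
    rw [hsplit (fun v => N.inDeg v)]
    have hLveq : LvF = Finset.univ.image N.leaf := by
      ext v
      rw [hLvF, Finset.mem_filter, Finset.mem_image]
      constructor
      · rintro ⟨-, h⟩
        obtain ⟨x, hx⟩ := hB.leafSurj v h
        exact ⟨x, Finset.mem_univ x, hx⟩
      · rintro ⟨x, -, rfl⟩
        exact ⟨Finset.mem_univ _, hB.leafIsLeaf x⟩
    have hLcard : LvF.card = Fintype.card X := by
      rw [hLveq, Finset.card_image_of_injective _ hB.leafInj, Finset.card_univ]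
    have e1 : ∑ v ∈ LvF, N.inDeg v = Fintype.card X := by
      rw [Finset.sum_congr rfl (fun v hv => hleaf_in v (Finset.mem_filter.mp hv).2),
        Finset.sum_const, smul_eq_mul, mul_one]
      exact hLcard
    have e3 : ∑ v ∈ RtF, N.inDeg v = 2 * RtF.card := by
      rw [Finset.sum_congr rfl (fun v hv => (hret v (Finset.mem_filter.mp hv).2.1
        (Finset.mem_filter.mp hv).2.2).1), Finset.sum_const, smul_eq_mul, mul_comm]
    have e2 : ∑ v ∈ ItF, N.inDeg v + 1 = ItF.card := by
      rw [← Finset.sum_erase_add ItF _ hroot_it, hB.rootIn]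
      have hone : ∀ v ∈ ItF.erase N.root, N.inDeg v = 1 := by
        intro v hv
        have h1 := (Finset.mem_filter.mp (Finset.mem_of_mem_erase hv)).2.2
        have h2 := hin1 v (Finset.ne_of_mem_erase hv)
        omega
      have : ∑ v ∈ ItF.erase N.root, N.inDeg v = (ItF.erase N.root).card := by
        rw [Finset.sum_congr rfl hone, Finset.sum_const, smul_eq_mul, mul_one]
      rw [this, Finset.card_erase_of_mem hroot_it]
      have : 1 ≤ ItF.card := Finset.card_pos.mpr ⟨N.root, hroot_it⟩
      omega
    omega
  -- reticulation count at most the number of leaves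
  have hr : RtF.card ≤ Fintype.card X := by
    have : RtF.card ≤ (Finset.univ : Finset X).card := by
      apply Finset.card_le_card_of_injOn (fun v => Classical.choose (reach_leaf hB hTC v))
        (fun _ _ => Finset.mem_univ _)
      intro v hv v' hv' heq
      have heq' : Classical.choose (reach_leaf hB hTC v)
          = Classical.choose (reach_leaf hB hTC v') := heq
      have p1 := Classical.choose_spec (reach_leaf hB hTC v)
      have p2 := Classical.choose_spec (reach_leaf hB hTC v')
      rw [heq'] at p1
      have nt : ∀ w, w ∈ RtF → ¬ N.IsTreeNode w := by
        intro w hw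
        have := (Finset.mem_filter.mp hw).2.2
        rw [Net.IsTreeNode]; omega
      exact treePath_src_unique p1 (nt v (Finset.mem_coe.mp hv)) p2 (nt v' (Finset.mem_coe.mp hv'))
    rwa [Finset.card_univ] at this
  -- conclude
  have hfin : {v : V | ¬ N.IsLeaf v ∧ N.inDeg v ≤ 1}.ncard = ItF.card := by
    rw [Set.ncard_eq_toFinset_card', Set.toFinset_setOf]
  rw [hfin]
  omega

end Part1c
section Part1d
open Relation Set Finset
set_option linter.unusedSectionVars false

lemma part1_main {V X : Type} [Fintype V] [Fintype X] (N : Net V X)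
    (hB : N.IsBinaryNet) (hTC : N.TreeChild)
    (ι : Type) (VT : ι → Type) (Ts : ∀ i, Net (VT i) X)
    (hfin : ∀ i, Finite (VT i)) (hbt : ∀ i, (Ts i).IsBinaryTree)
    (hdisp : ∀ i, Display (Ts i) N) :
    {q : Sym2 X × X | ∃ a b, q.1 = s(a, b) ∧ ∃ i, (Ts i).Has3Subtree a b q.2}.ncard
      ≤ 2 * (2 * Fintype.card X - 3) * (Fintype.card X - 2) := by
  classical
  set n := Fintype.card X with hn
  set Q : Set (Sym2 X × X) :=
    {q : Sym2 X × X | ∃ a b, q.1 = s(a, b) ∧ ∃ i, (Ts i).Has3Subtree a b q.2} with hQdef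
  have hmem : ∀ q ∈ Q, ∃ a b, q.1 = s(a, b) ∧ a ≠ b ∧ q.2 ≠ a ∧ q.2 ≠ b ∧
      ∃ v, CherryAt N v a b := by
    rintro q ⟨a, b, h1, i, h3⟩
    have h3' := h3
    obtain ⟨hab, hac, hbc, -⟩ := h3'
    have : Finite (VT i) := hfin i
    obtain ⟨v, hv⟩ := extract hB hTC (hbt i) (hdisp i) h3
    exact ⟨a, b, h1, hab, Ne.symm hac, Ne.symm hbc, v, hv⟩
  have hQfin : Q.Finite := Set.toFinite Q
  set QF := hQfin.toFinset with hQF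
  set CF := QF.image Prod.fst with hCF
  -- fibers over each cherry have at most n - 2 elements
  have hfiber : ∀ p ∈ CF, (QF.filter (fun q => q.1 = p)).card ≤ n - 2 := by
    intro p hp
    rw [hCF, Finset.mem_image] at hp
    obtain ⟨q0, hq0, hq0p⟩ := hp
    obtain ⟨a, b, ha1, hab, -, -, -⟩ := hmem q0 (hQfin.mem_toFinset.mp hq0)
    have hpab : p = s(a, b) := hq0p ▸ ha1
    have : (QF.filter (fun q => q.1 = p)).card ≤ ((Finset.univ : Finset X) \ {a, b}).card := by
      apply Finset.card_le_card_of_injOn Prod.snd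
      · intro q hq
        rw [Finset.mem_coe, Finset.mem_filter] at hq
        obtain ⟨a', b', h1', -, h3', h4', -⟩ := hmem q (hQfin.mem_toFinset.mp hq.1)
        have : s(a', b') = s(a, b) := by rw [← h1', hq.2, hpab]
        rw [Finset.mem_coe, Finset.mem_sdiff, Finset.mem_insert, Finset.mem_singleton]
        refine ⟨Finset.mem_univ _, ?_⟩
        rcases Sym2.eq_iff.mp this with ⟨rfl, rfl⟩ | ⟨rfl, rfl⟩
        · rintro (h | h) <;> [exact h3' h; exact h4' h]
        · rintro (h | h) <;> [exact h4' h; exact h3' h]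
      · intro q hq q' hq' hsnd
        have h1 : q.1 = p := (Finset.mem_filter.mp (Finset.mem_coe.mp hq)).2
        have h2 : q'.1 = p := (Finset.mem_filter.mp (Finset.mem_coe.mp hq')).2
        exact Prod.ext (h1.trans h2.symm) hsnd
    refine le_trans this ?_
    rw [Finset.card_sdiff_of_subset (by intro x _; exact Finset.mem_univ x), Finset.card_univ,
      Finset.card_insert_of_notMem (by simpa using hab), Finset.card_singleton]
  -- the cherries inject into the internal tree nodes
  set ItF := Finset.univ.filter (fun v : V => ¬ N.IsLeaf v ∧ N.inDeg v ≤ 1) with hItF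
  have hCcard : CF.card ≤ ItF.card := by
    set f : Sym2 X → V := fun p =>
      if h : ∃ v, ∃ a b, p = s(a, b) ∧ CherryAt N v a b then h.choose else N.root with hf
    have hspec : ∀ p ∈ CF, ∃ a b, p = s(a, b) ∧ CherryAt N (f p) a b := by
      intro p hp
      rw [hCF, Finset.mem_image] at hp
      obtain ⟨q0, hq0, hq0p⟩ := hp
      obtain ⟨a, b, ha1, -, -, -, v, hv⟩ := hmem q0 (hQfin.mem_toFinset.mp hq0)
      have hex : ∃ v, ∃ a b, p = s(a, b) ∧ CherryAt N v a b :=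
        ⟨v, a, b, hq0p ▸ ha1, hv⟩
      rw [hf]
      simp only [dif_pos hex]
      exact hex.choose_spec
    apply Finset.card_le_card_of_injOn f
    · intro p hp
      obtain ⟨a, b, -, hv⟩ := hspec p hp
      obtain ⟨ho, hi⟩ := cherryAt_outDeg hB hv
      rw [hItF, Finset.mem_coe, Finset.mem_filter]
      refine ⟨Finset.mem_univ _, fun hl => by rw [Net.IsLeaf] at hl; omega, hi⟩
    · intro p hp p' hp' heq
      obtain ⟨a, b, hp1, hv⟩ := hspec p (Finset.mem_coe.mp hp)
      obtain ⟨a', b', hp1', hv'⟩ := hspec p' (Finset.mem_coe.mp hp')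
      rw [hp1, hp1']
      exact cherryAt_unique hB hTC hv (heq ▸ hv')
  -- put everything together
  have hQcard : Q.ncard = QF.card := Set.ncard_eq_toFinset_card Q hQfin
  have hstep : QF.card ≤ (n - 2) * CF.card :=
    Finset.card_le_mul_card_image QF (n - 2) hfiber
  have hit : ItF.card + 1 ≤ 2 * n := by
    have := count_main hB hTC
    rw [Set.ncard_eq_toFinset_card', Set.toFinset_setOf] at this
    exact this
  rw [hQcard]
  calc (QF.card : ℕ) ≤ (n - 2) * CF.card := hstep
    _ ≤ (n - 2) * ItF.card := Nat.mul_le_mul_left _ hCcard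
    _ ≤ 2 * (2 * n - 3) * (n - 2) := by
        rcases le_or_gt n 2 with h | h
        · have : n - 2 = 0 := by omega
          rw [this, Nat.zero_mul]
          exact Nat.zero_le _
        · rw [Nat.mul_comm (n - 2)]
          exact Nat.mul_le_mul_right _ (by omega)

end Part1d
section Part2a
open Relation Set
set_option linter.unusedSectionVars false

inductive VV (n : ℕ) : Type where
  | rho : VV n
  | c (i : Fin (n-2)) : VV n
  | d (i : Fin (n-2)) : VV n
  | R (i : Fin (n-2)) : VV n
  | lf (k : Fin n) : VV n
deriving DecidableEq

def sumToVV (n : ℕ) : (Unit ⊕ Fin (n-2) ⊕ Fin (n-2) ⊕ Fin (n-2) ⊕ Fin n) → VV n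
  | .inl _ => .rho
  | .inr (.inl i) => .c i
  | .inr (.inr (.inl i)) => .d i
  | .inr (.inr (.inr (.inl i))) => .R i
  | .inr (.inr (.inr (.inr k))) => .lf k

noncomputable instance (n : ℕ) : Fintype (VV n) :=
  Fintype.ofSurjective (sumToVV n) (by
    intro v
    cases v with
    | rho => exact ⟨.inl (), rfl⟩
    | c i => exact ⟨.inr (.inl i), rfl⟩
    | d i => exact ⟨.inr (.inr (.inl i)), rfl⟩
    | R i => exact ⟨.inr (.inr (.inr (.inl i))), rfl⟩
    | lf k => exact ⟨.inr (.inr (.inr (.inr k))), rfl⟩)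

def EE (n : ℕ) : VV n → VV n → Prop
  | .rho, .c j => (j : ℕ) = 0
  | .rho, .d j => (j : ℕ) = 0
  | .c i, .R j => i = j
  | .c i, .c j => (j : ℕ) = (i : ℕ) + 1
  | .c i, .lf k => (i : ℕ) = n - 3 ∧ (k : ℕ) = n - 2
  | .d i, .R j => (j : ℕ) + (i : ℕ) = n - 3
  | .d i, .d j => (j : ℕ) = (i : ℕ) + 1
  | .d i, .lf k => (i : ℕ) = n - 3 ∧ (k : ℕ) = n - 1
  | .R i, .lf k => (k : ℕ) = (i : ℕ)
  | _, _ => False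

def netN (n : ℕ) : Net (VV n) (Fin n) := ⟨EE n, .rho, fun k => .lf k⟩

variable {n : ℕ}

def cnxt (hn : 4 ≤ n) (i : Fin (n-2)) : VV n :=
  if h : (i : ℕ) + 1 < n - 2 then .c ⟨(i : ℕ) + 1, h⟩ else .lf ⟨n-2, by omega⟩

def dnxt (hn : 4 ≤ n) (i : Fin (n-2)) : VV n :=
  if h : (i : ℕ) + 1 < n - 2 then .d ⟨(i : ℕ) + 1, h⟩ else .lf ⟨n-1, by omega⟩

def cprv (j : Fin (n-2)) : VV n :=
  if h : (j : ℕ) = 0 then .rho else .c ⟨(j : ℕ) - 1, by omega⟩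

def dprv (j : Fin (n-2)) : VV n :=
  if h : (j : ℕ) = 0 then .rho else .d ⟨(j : ℕ) - 1, by omega⟩

def lparent (hn : 4 ≤ n) (k : Fin n) : VV n :=
  if h : (k : ℕ) < n - 2 then .R ⟨k, h⟩
  else if (k : ℕ) = n - 2 then .c ⟨n-3, by omega⟩ else .d ⟨n-3, by omega⟩

-- acyclicity
def rnk : VV n → ℕ
  | .rho => 0
  | .c i => (i : ℕ) + 1
  | .d i => (i : ℕ) + 1
  | .R _ => n
  | .lf _ => n + 1

variable (hn : 4 ≤ n)
include hn

lemma out_rho : {w | EE n .rho w} = {VV.c ⟨0, by omega⟩, VV.d ⟨0, by omega⟩} := by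
  ext w; cases w <;> simp [EE, Fin.ext_iff]

lemma out_c (i : Fin (n-2)) : {w | EE n (.c i) w} = {VV.R i, cnxt hn i} := by
  ext w
  rw [cnxt]
  split_ifs with h
  · cases w <;> simp [EE, Fin.ext_iff] <;> omega
  · have : (i : ℕ) < n - 2 := i.2
    cases w <;> simp [EE, Fin.ext_iff] <;> omega

lemma out_d (i : Fin (n-2)) :
    {w | EE n (.d i) w} = {VV.R ⟨n-3-i, by omega⟩, dnxt hn i} := by
  ext w
  rw [dnxt]
  have : (i : ℕ) < n - 2 := i.2
  split_ifs with h
  · cases w <;> simp [EE, Fin.ext_iff] <;> omega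
  · cases w <;> simp [EE, Fin.ext_iff] <;> omega

lemma out_R (i : Fin (n-2)) : {w | EE n (.R i) w} = {VV.lf ⟨i, by omega⟩} := by
  have : (i : ℕ) < n - 2 := i.2
  ext w; cases w <;> simp [EE, Fin.ext_iff] <;> omega

lemma out_lf (k : Fin n) : {w | EE n (.lf k) w} = ∅ := by
  ext w; cases w <;> simp [EE]

lemma in_rho : {u | EE n u (.rho : VV n)} = ∅ := by
  ext u; cases u <;> simp [EE]

lemma in_c (j : Fin (n-2)) : {u | EE n u (.c j)} = {cprv j} := by
  ext u
  rw [cprv]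
  have : (j : ℕ) < n - 2 := j.2
  split_ifs with h
  · cases u <;> simp [EE, Fin.ext_iff] <;> omega
  · cases u <;> simp [EE, Fin.ext_iff] <;> omega

lemma in_d (j : Fin (n-2)) : {u | EE n u (.d j)} = {dprv j} := by
  ext u
  rw [dprv]
  have : (j : ℕ) < n - 2 := j.2
  split_ifs with h
  · cases u <;> simp [EE, Fin.ext_iff] <;> omega
  · cases u <;> simp [EE, Fin.ext_iff] <;> omega

lemma in_R (j : Fin (n-2)) :
    {u | EE n u (.R j)} = {VV.c j, VV.d ⟨n-3-j, by omega⟩} := by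
  ext u
  have : (j : ℕ) < n - 2 := j.2
  cases u <;> simp [EE, Fin.ext_iff] <;> omega

lemma in_lf (k : Fin n) : {u | EE n u (.lf k)} = {lparent hn k} := by
  ext u
  rw [lparent]
  have : (k : ℕ) < n := k.2
  split_ifs with h h2
  · cases u <;> simp [EE, Fin.ext_iff] <;> omega
  · cases u <;> simp [EE, Fin.ext_iff] <;> omega
  · cases u <;> simp [EE, Fin.ext_iff] <;> omega

-- degrees
lemma outDeg_rho : (netN n).outDeg .rho = 2 := by
  rw [Net.outDeg]
  show {w | EE n .rho w}.ncard = 2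
  rw [out_rho hn]
  exact Set.ncard_pair (by simp)

lemma outDeg_c (i : Fin (n-2)) : (netN n).outDeg (.c i) = 2 := by
  rw [Net.outDeg]
  show {w | EE n (.c i) w}.ncard = 2
  rw [out_c hn i]
  refine Set.ncard_pair ?_
  rw [cnxt]; split_ifs <;> simp [Fin.ext_iff] <;> omega

lemma outDeg_d (i : Fin (n-2)) : (netN n).outDeg (.d i) = 2 := by
  rw [Net.outDeg]
  show {w | EE n (.d i) w}.ncard = 2
  rw [out_d hn i]
  refine Set.ncard_pair ?_
  rw [dnxt]; split_ifs <;> simp [Fin.ext_iff] <;> omega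

lemma outDeg_R (i : Fin (n-2)) : (netN n).outDeg (.R i) = 1 := by
  rw [Net.outDeg]
  show {w | EE n (.R i) w}.ncard = 1
  rw [out_R hn i, Set.ncard_singleton]

lemma outDeg_lf (k : Fin n) : (netN n).outDeg (.lf k) = 0 := by
  rw [Net.outDeg]
  show {w | EE n (.lf k) w}.ncard = 0
  rw [out_lf hn k, Set.ncard_empty]

lemma inDeg_rho : (netN n).inDeg (.rho : VV n) = 0 := by
  rw [Net.inDeg]
  show {u | EE n u (.rho : VV n)}.ncard = 0
  rw [in_rho hn, Set.ncard_empty]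

lemma inDeg_c (j : Fin (n-2)) : (netN n).inDeg (.c j) = 1 := by
  rw [Net.inDeg]
  show {u | EE n u (.c j)}.ncard = 1
  rw [in_c hn j, Set.ncard_singleton]

lemma inDeg_d (j : Fin (n-2)) : (netN n).inDeg (.d j) = 1 := by
  rw [Net.inDeg]
  show {u | EE n u (.d j)}.ncard = 1
  rw [in_d hn j, Set.ncard_singleton]

lemma inDeg_R (j : Fin (n-2)) : (netN n).inDeg (.R j) = 2 := by
  rw [Net.inDeg]
  show {u | EE n u (.R j)}.ncard = 2
  rw [in_R hn j]
  exact Set.ncard_pair (by simp)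

lemma inDeg_lf (k : Fin n) : (netN n).inDeg (.lf k) = 1 := by
  rw [Net.inDeg]
  show {u | EE n u (.lf k)}.ncard = 1
  rw [in_lf hn k, Set.ncard_singleton]

lemma rnk_mono {u v : VV n} (h : EE n u v) : rnk u < rnk v := by
  cases u <;> cases v <;> simp [EE, rnk] at h ⊢ <;>
    first
    | omega
    | (rename_i i j; have : (i : ℕ) < n - 2 := i.2; omega)

lemma netN_acyclic : (netN n).Acyclic := by
  intro v hv
  have : ∀ a b : VV n, Relation.TransGen (EE n) a b → rnk a < rnk b := by
    intro a b h
    induction h with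
    | single h => exact rnk_mono hn h
    | tail _ h ih => exact lt_trans ih (rnk_mono hn h)
  exact absurd (this v v hv) (lt_irrefl _)

-- reachability
lemma reach_c : ∀ (i : ℕ) (h : i < n - 2),
    Relation.ReflTransGen (EE n) .rho (.c ⟨i, h⟩) := by
  intro i
  induction i with
  | zero => intro h; exact Relation.ReflTransGen.single (by simp [EE])
  | succ i ih =>
    intro h
    exact (ih (by omega)).tail (by simp [EE])

lemma reach_d : ∀ (i : ℕ) (h : i < n - 2),
    Relation.ReflTransGen (EE n) .rho (.d ⟨i, h⟩) := by
  intro i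
  induction i with
  | zero => intro h; exact Relation.ReflTransGen.single (by simp [EE])
  | succ i ih =>
    intro h
    exact (ih (by omega)).tail (by simp [EE])

lemma netN_reach (v : VV n) : Relation.ReflTransGen (EE n) .rho v := by
  cases v with
  | rho => exact Relation.ReflTransGen.refl
  | c i => exact reach_c hn i i.2
  | d i => exact reach_d hn i i.2
  | R i => exact (reach_c hn i i.2).tail (by simp [EE])
  | lf k =>
    by_cases h : (k : ℕ) < n - 2
    · exact ((reach_c hn k h).tail (show EE n (.c ⟨k, h⟩) (.R ⟨k, h⟩) by simp [EE])).tail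
        (by simp [EE])
    · by_cases h2 : (k : ℕ) = n - 2
      · exact (reach_c hn (n-3) (by omega)).tail (by simp [EE]; omega)
      · have h3 : (k : ℕ) = n - 1 := by have := k.2; omega
        exact (reach_d hn (n-3) (by omega)).tail (by simp [EE]; omega)

lemma netN_binary : (netN n).IsBinaryNet := by
  refine ⟨⟨netN_acyclic hn, inDeg_rho hn, netN_reach hn, ?_, ?_, ?_, inDeg_lf hn⟩, ?_⟩
  · intro a b hab
    simpa [netN] using hab
  · intro k
    rw [Net.IsLeaf]
    exact outDeg_lf hn k
  · intro v hv
    rw [Net.IsLeaf] at hv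
    cases v with
    | rho => rw [outDeg_rho hn] at hv; omega
    | c i => rw [outDeg_c hn i] at hv; omega
    | d i => rw [outDeg_d hn i] at hv; omega
    | R i => rw [outDeg_R hn i] at hv; omega
    | lf k => exact ⟨k, rfl⟩
  · intro v hv
    cases v with
    | rho => exact Or.inl ⟨by rw [inDeg_rho hn]; omega, outDeg_rho hn⟩
    | c i => exact Or.inl ⟨by rw [inDeg_c hn i], outDeg_c hn i⟩
    | d i => exact Or.inl ⟨by rw [inDeg_d hn i], outDeg_d hn i⟩
    | R i => exact Or.inr ⟨inDeg_R hn i, outDeg_R hn i⟩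
    | lf k => exact absurd (outDeg_lf hn k) hv

lemma netN_treeChild : (netN n).TreeChild := by
  intro v hv
  cases v with
  | rho =>
    refine ⟨.c ⟨0, by omega⟩, by simp [netN, EE], ?_⟩
    rw [Net.IsTreeNode]; rw [inDeg_c hn]
  | c i =>
    refine ⟨cnxt hn i, ?_, ?_⟩
    · show EE n (.c i) (cnxt hn i)
      rw [cnxt]
      split_ifs with h
      · simp [EE]
      · have : (i : ℕ) < n - 2 := i.2
        simp [EE]; omega
    · rw [Net.IsTreeNode, cnxt]
      split_ifs with h
      · rw [inDeg_c hn _]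
      · rw [inDeg_lf hn]
  | d i =>
    refine ⟨dnxt hn i, ?_, ?_⟩
    · show EE n (.d i) (dnxt hn i)
      rw [dnxt]
      split_ifs with h
      · simp [EE]
      · have : (i : ℕ) < n - 2 := i.2
        simp [EE]; omega
    · rw [Net.IsTreeNode, dnxt]
      split_ifs with h
      · rw [inDeg_d hn _]
      · rw [inDeg_lf hn]
  | R i =>
    refine ⟨.lf ⟨i, by omega⟩, by simp [netN, EE], ?_⟩
    rw [Net.IsTreeNode, inDeg_lf hn]
  | lf k => exact absurd (by rw [Net.IsLeaf]; exact outDeg_lf hn k) hv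

end Part2a
section Part2b
open Relation Set
set_option linter.unusedSectionVars false

variable {n : ℕ}

/-- position `l` of the `c`-chain is kept: taxon `l` chooses the `c`-side -/
def KC (σ : Fin (n-2) → Bool) (l : ℕ) : Prop := ∃ h : l < n - 2, σ ⟨l, h⟩ = true

/-- position `p` of the `d`-chain is kept: taxon `n-3-p` chooses the `d`-side -/
def KD (σ : Fin (n-2) → Bool) (p : ℕ) : Prop :=
  ∃ h : p < n - 2, σ ⟨n - 3 - p, by omega⟩ = false

def Kp (σ : Fin (n-2) → Bool) : VV n → Prop
  | .rho => True
  | .c i => KC σ (i : ℕ)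
  | .d i => KD σ (i : ℕ)
  | .R _ => False
  | .lf _ => True

def Sσ (n : ℕ) (σ : Fin (n-2) → Bool) : VV n → VV n → Prop
  | .rho, .c j => (j : ℕ) = 0
  | .rho, .d j => (j : ℕ) = 0
  | .c i, .R j => i = j ∧ σ i = true
  | .c i, .c j => (j : ℕ) = (i : ℕ) + 1
  | .c i, .lf k => (i : ℕ) = n - 3 ∧ (k : ℕ) = n - 2
  | .d i, .R j => (j : ℕ) + (i : ℕ) = n - 3 ∧ σ j = false
  | .d i, .d j => (j : ℕ) = (i : ℕ) + 1
  | .d i, .lf k => (i : ℕ) = n - 3 ∧ (k : ℕ) = n - 1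
  | .R i, .lf k => (k : ℕ) = (i : ℕ)
  | _, _ => False

def TE (σ : Fin (n-2) → Bool) : VV n → VV n → Prop
  | .rho, .c j => KC σ (j : ℕ) ∧ ∀ l < (j : ℕ), ¬ KC σ l
  | .rho, .d j => KD σ (j : ℕ) ∧ ∀ l < (j : ℕ), ¬ KD σ l
  | .rho, .lf k => ((k : ℕ) = n - 2 ∧ ∀ l, ¬ KC σ l) ∨ ((k : ℕ) = n - 1 ∧ ∀ l, ¬ KD σ l)
  | .c i, .c j => KC σ (i : ℕ) ∧ KC σ (j : ℕ) ∧ (i : ℕ) < (j : ℕ) ∧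
      ∀ l, (i : ℕ) < l → l < (j : ℕ) → ¬ KC σ l
  | .c i, .lf k => KC σ (i : ℕ) ∧
      ((k : ℕ) = (i : ℕ) ∨ ((k : ℕ) = n - 2 ∧ ∀ l, (i : ℕ) < l → ¬ KC σ l))
  | .d i, .d j => KD σ (i : ℕ) ∧ KD σ (j : ℕ) ∧ (i : ℕ) < (j : ℕ) ∧
      ∀ l, (i : ℕ) < l → l < (j : ℕ) → ¬ KD σ l
  | .d i, .lf k => KD σ (i : ℕ) ∧
      ((k : ℕ) + (i : ℕ) = n - 3 ∨ ((k : ℕ) = n - 1 ∧ ∀ l, (i : ℕ) < l → ¬ KD σ l))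
  | _, _ => False

def VTt (n : ℕ) (σ : Fin (n-2) → Bool) : Type := {v : VV n // Kp σ v}

noncomputable instance (n : ℕ) (σ : Fin (n-2) → Bool) : Fintype (VTt n σ) := by
  have : Finite (VTt n σ) := Subtype.finite
  exact Fintype.ofFinite _

def netT (n : ℕ) (σ : Fin (n-2) → Bool) : Net (VTt n σ) (Fin n) :=
  ⟨fun a b => TE σ a.val b.val, ⟨.rho, trivial⟩, fun k => ⟨.lf k, trivial⟩⟩

variable {σ : Fin (n-2) → Bool}

lemma Ssub (hn : 4 ≤ n) : ∀ u v, Sσ n σ u v → EE n u v := by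
  intro u v h
  cases u <;> cases v <;> simp [Sσ, EE] at h ⊢ <;> tauto

-- minima and maxima of predicates on ℕ
lemma nat_min {P : ℕ → Prop} (h : ∃ l, P l) : ∃ l, P l ∧ ∀ l' < l, ¬ P l' := by
  classical
  exact ⟨Nat.find h, Nat.find_spec h, fun l' hl => Nat.find_min h hl⟩

lemma nat_max {P : ℕ → Prop} {B : ℕ} (h : ∃ l, l < B ∧ P l) :
    ∃ l, l < B ∧ P l ∧ ∀ l', l < l' → l' < B → ¬ P l' := by
  classical
  induction B with
  | zero => obtain ⟨l, hl, _⟩ := h; omega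
  | succ B ih =>
    by_cases hB : P B
    · exact ⟨B, by omega, hB, fun l' h1 h2 => by omega⟩
    · obtain ⟨l, hl, hPl⟩ := h
      have : l < B := by
        rcases Nat.lt_succ_iff_lt_or_eq.mp hl with h | rfl
        · exact h
        · exact absurd hPl hB
      obtain ⟨l0, h1, h2, h3⟩ := ih ⟨l, this, hPl⟩
      refine ⟨l0, by omega, h2, fun l' ha hb => ?_⟩
      rcases Nat.lt_succ_iff_lt_or_eq.mp hb with h | rfl
      · exact h3 l' ha h
      · exact hB

lemma KC_lt {l : ℕ} (h : KC σ l) : l < n - 2 := h.1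
lemma KD_lt {p : ℕ} (h : KD σ p) : p < n - 2 := h.1

variable (hn : 4 ≤ n)
include hn

-- S out-sets
lemma outS_rho : {w | Sσ n σ .rho w} = {VV.c ⟨0, by omega⟩, VV.d ⟨0, by omega⟩} := by
  ext w; cases w <;> simp [Sσ, Fin.ext_iff]

lemma outS_c_t {i : Fin (n-2)} (hσ : σ i = true) :
    {w | Sσ n σ (.c i) w} = {VV.R i, cnxt hn i} := by
  ext w
  rw [cnxt]
  have : (i : ℕ) < n - 2 := i.2
  split_ifs with h
  · cases w <;> simp [Sσ, Fin.ext_iff, hσ] <;> omega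
  · cases w <;> simp [Sσ, Fin.ext_iff, hσ] <;> omega

lemma outS_c_f {i : Fin (n-2)} (hσ : σ i = false) :
    {w | Sσ n σ (.c i) w} = {cnxt hn i} := by
  ext w
  rw [cnxt]
  have : (i : ℕ) < n - 2 := i.2
  split_ifs with h
  · cases w <;> simp [Sσ, Fin.ext_iff, hσ] <;> omega
  · cases w <;> simp [Sσ, Fin.ext_iff, hσ] <;> omega

lemma outS_d_t {i : Fin (n-2)} (hσ : σ ⟨n - 3 - (i : ℕ), by omega⟩ = false) :
    {w | Sσ n σ (.d i) w} = {VV.R ⟨n - 3 - (i : ℕ), by omega⟩, dnxt hn i} := by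
  ext w
  rw [dnxt]
  have : (i : ℕ) < n - 2 := i.2
  split_ifs with h <;>
  · cases w with
    | R j =>
      simp only [Sσ, Set.mem_setOf_eq, Set.mem_insert_iff, Set.mem_singleton_iff]
      constructor
      · rintro ⟨h1, h2⟩
        left
        congr 1
        apply Fin.ext; simp; omega
      · rintro (h1 | h1)
        · cases h1
          exact ⟨by simp; omega, hσ⟩
        · simp at h1
    | _ => simp [Sσ, Fin.ext_iff] <;> omega
  done

lemma outS_d_f {i : Fin (n-2)} (hσ : σ ⟨n - 3 - (i : ℕ), by omega⟩ = true) :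
    {w | Sσ n σ (.d i) w} = {dnxt hn i} := by
  ext w
  rw [dnxt]
  have : (i : ℕ) < n - 2 := i.2
  split_ifs with h <;>
  · cases w with
    | R j =>
      simp only [Sσ, Set.mem_setOf_eq, Set.mem_singleton_iff]
      constructor
      · rintro ⟨h1, h2⟩
        have hj : j = (⟨n - 3 - (i : ℕ), by omega⟩ : Fin (n-2)) := by
          apply Fin.ext; simp; omega
        rw [hj, hσ] at h2
        simp at h2
      · intro h1; simp at h1
    | _ => simp [Sσ, Fin.ext_iff] <;> omega
  done

lemma outS_R (i : Fin (n-2)) : {w | Sσ n σ (.R i) w} = {VV.lf ⟨i, by omega⟩} := by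
  have : (i : ℕ) < n - 2 := i.2
  ext w; cases w <;> simp [Sσ, Fin.ext_iff] <;> omega

lemma outS_lf (k : Fin n) : {w | Sσ n σ (.lf k) w} = ∅ := by
  ext w; cases w <;> simp [Sσ]

-- S in-sets
lemma inS_rho : {u | Sσ n σ u (.rho : VV n)} = ∅ := by
  ext u; cases u <;> simp [Sσ]

lemma inS_c (j : Fin (n-2)) : {u | Sσ n σ u (.c j)} = {cprv j} := by
  ext u
  rw [cprv]
  have : (j : ℕ) < n - 2 := j.2
  split_ifs with h
  · cases u <;> simp [Sσ, Fin.ext_iff] <;> omega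
  · cases u <;> simp [Sσ, Fin.ext_iff] <;> omega

lemma inS_d (j : Fin (n-2)) : {u | Sσ n σ u (.d j)} = {dprv j} := by
  ext u
  rw [dprv]
  have : (j : ℕ) < n - 2 := j.2
  split_ifs with h
  · cases u <;> simp [Sσ, Fin.ext_iff] <;> omega
  · cases u <;> simp [Sσ, Fin.ext_iff] <;> omega

lemma inS_R_t {j : Fin (n-2)} (hσ : σ j = true) :
    {u | Sσ n σ u (.R j)} = {VV.c j} := by
  ext u
  cases u with
  | c i =>
    simp only [Sσ, Set.mem_setOf_eq, Set.mem_singleton_iff, VV.c.injEq]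
    constructor
    · rintro ⟨rfl, -⟩; rfl
    · rintro rfl; exact ⟨rfl, hσ⟩
  | d i =>
    simp only [Sσ, Set.mem_setOf_eq, Set.mem_singleton_iff]
    constructor
    · rintro ⟨-, h2⟩; rw [hσ] at h2; simp at h2
    · intro h1; simp at h1
  | _ => simp [Sσ]

lemma inS_R_f {j : Fin (n-2)} (hσ : σ j = false) :
    {u | Sσ n σ u (.R j)} = {VV.d ⟨n - 3 - (j : ℕ), by omega⟩} := by
  have : (j : ℕ) < n - 2 := j.2
  ext u
  cases u with
  | c i =>
    simp only [Sσ, Set.mem_setOf_eq, Set.mem_singleton_iff]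
    constructor
    · rintro ⟨rfl, h2⟩; rw [hσ] at h2; simp at h2
    · intro h1; simp at h1
  | d i =>
    simp only [Sσ, Set.mem_setOf_eq, Set.mem_singleton_iff, VV.d.injEq]
    constructor
    · rintro ⟨h1, -⟩
      apply Fin.ext
      show (i : ℕ) = n - 3 - (j : ℕ)
      omega
    · rintro rfl
      refine ⟨?_, hσ⟩
      show (j : ℕ) + (n - 3 - (j : ℕ)) = n - 3
      omega
  | _ => simp [Sσ]

lemma inS_lf (k : Fin n) : {u | Sσ n σ u (.lf k)} = {lparent hn k} := by
  ext u
  rw [lparent]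
  have : (k : ℕ) < n := k.2
  split_ifs with h h2
  · cases u <;> simp [Sσ, Fin.ext_iff] <;> omega
  · cases u <;> simp [Sσ, Fin.ext_iff] <;> omega
  · cases u <;> simp [Sσ, Fin.ext_iff] <;> omega

end Part2b
section Part2c
open Relation Set
set_option linter.unusedSectionVars false

variable {n : ℕ} {σ : Fin (n-2) → Bool}

def cElt {l0 : ℕ} (h : KC σ l0) : VTt n σ := ⟨.c ⟨l0, h.1⟩, h⟩
def dElt {p : ℕ} (h : KD σ p) : VTt n σ := ⟨.d ⟨p, h.1⟩, h⟩
def lfElt (k : Fin n) : VTt n σ := ⟨.lf k, trivial⟩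
def rootT : VTt n σ := ⟨.rho, trivial⟩

lemma rootT_eq : (netT n σ).root = rootT := rfl
lemma leafT_eq (k : Fin n) : (netT n σ).leaf k = lfElt k := rfl

lemma KC_coe {j : Fin (n-2)} : KC σ (j : ℕ) ↔ σ j = true := by
  constructor
  · rintro ⟨h, e⟩
    rwa [Fin.eta] at e
  · intro e
    exact ⟨j.2, by rwa [Fin.eta]⟩

variable (hn : 4 ≤ n)
include hn

lemma KD_coe {j : Fin (n-2)} :
    KD σ (j : ℕ) ↔ σ ⟨n - 3 - (j : ℕ), by omega⟩ = false := by
  constructor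
  · rintro ⟨h, e⟩
    exact e
  · intro e
    exact ⟨j.2, e⟩

omit hn

lemma TinDeg_rho : (netT n σ).inDeg (netT n σ).root = 0 := by
  rw [Net.inDeg, Set.ncard_eq_zero (Set.toFinite _)]
  ext u
  obtain ⟨v, hv⟩ := u
  cases v <;> simp [netT, TE]

lemma ToutDeg_lf (k : Fin n) : (netT n σ).outDeg ((netT n σ).leaf k) = 0 := by
  rw [Net.outDeg, Set.ncard_eq_zero (Set.toFinite _)]
  ext u
  obtain ⟨v, hv⟩ := u
  cases v <;> simp [netT, TE]

lemma TinDeg_c {j : Fin (n-2)} (hj : Kp σ (.c j)) :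
    (netT n σ).inDeg ⟨.c j, hj⟩ = 1 := by
  unfold Net.inDeg
  have hjKC : KC σ (j : ℕ) := hj
  by_cases hc : ∃ l, l < (j : ℕ) ∧ KC σ l
  · obtain ⟨l0, hl1, hl2, hl3⟩ := nat_max hc
    refine Eq.trans (congrArg Set.ncard ((Set.eq_singleton_iff_unique_mem (a := cElt hl2)).mpr ?_)) (Set.ncard_singleton _)
    constructor
    · show TE σ (.c ⟨l0, hl2.1⟩) (.c j)
      exact ⟨hl2, hjKC, hl1, fun l ha hb => hl3 l ha hb⟩
    · rintro ⟨v, hv⟩ hmem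
      cases v with
      | rho => exact absurd hl2 (hmem.2 l0 hl1)
      | c i =>
        obtain ⟨h1, h2, h3, h4⟩ := hmem
        have : (i : ℕ) = l0 := by
          by_contra hne
          rcases Nat.lt_or_ge (i : ℕ) l0 with h | h
          · exact h4 l0 h hl1 hl2
          · exact hl3 _ (by omega) h3 h1
        apply Subtype.ext
        show VV.c i = VV.c ⟨l0, hl2.1⟩
        rw [show i = (⟨l0, hl2.1⟩ : Fin (n-2)) from Fin.ext this]
      | d i => exact absurd hmem (fun h => h)
      | R i => exact absurd hmem (fun h => h)
      | lf k => exact absurd hmem (fun h => h)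
  · push_neg at hc
    refine Eq.trans (congrArg Set.ncard ((Set.eq_singleton_iff_unique_mem (a := rootT)).mpr ?_)) (Set.ncard_singleton _)
    constructor
    · show TE σ .rho (.c j)
      exact ⟨hjKC, fun l hl => hc l hl⟩
    · rintro ⟨v, hv⟩ hmem
      cases v with
      | rho => rfl
      | c i =>
        obtain ⟨h1, h2, h3, h4⟩ := hmem
        exact absurd h1 (hc _ h3)
      | d i => exact absurd hmem (fun h => h)
      | R i => exact absurd hmem (fun h => h)
      | lf k => exact absurd hmem (fun h => h)

lemma TinDeg_d {j : Fin (n-2)} (hj : Kp σ (.d j)) :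
    (netT n σ).inDeg ⟨.d j, hj⟩ = 1 := by
  unfold Net.inDeg
  have hjKD : KD σ (j : ℕ) := hj
  by_cases hc : ∃ l, l < (j : ℕ) ∧ KD σ l
  · obtain ⟨l0, hl1, hl2, hl3⟩ := nat_max hc
    refine Eq.trans (congrArg Set.ncard ((Set.eq_singleton_iff_unique_mem (a := dElt hl2)).mpr ?_)) (Set.ncard_singleton _)
    constructor
    · show TE σ (.d ⟨l0, hl2.1⟩) (.d j)
      exact ⟨hl2, hjKD, hl1, fun l ha hb => hl3 l ha hb⟩
    · rintro ⟨v, hv⟩ hmem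
      cases v with
      | rho => exact absurd hl2 (hmem.2 l0 hl1)
      | d i =>
        obtain ⟨h1, h2, h3, h4⟩ := hmem
        have : (i : ℕ) = l0 := by
          by_contra hne
          rcases Nat.lt_or_ge (i : ℕ) l0 with h | h
          · exact h4 l0 h hl1 hl2
          · exact hl3 _ (by omega) h3 h1
        apply Subtype.ext
        show VV.d i = VV.d ⟨l0, hl2.1⟩
        rw [show i = (⟨l0, hl2.1⟩ : Fin (n-2)) from Fin.ext this]
      | c i => exact absurd hmem (fun h => h)
      | R i => exact absurd hmem (fun h => h)
      | lf k => exact absurd hmem (fun h => h)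
  · push_neg at hc
    refine Eq.trans (congrArg Set.ncard ((Set.eq_singleton_iff_unique_mem (a := rootT)).mpr ?_)) (Set.ncard_singleton _)
    constructor
    · show TE σ .rho (.d j)
      exact ⟨hjKD, fun l hl => hc l hl⟩
    · rintro ⟨v, hv⟩ hmem
      cases v with
      | rho => rfl
      | d i =>
        obtain ⟨h1, h2, h3, h4⟩ := hmem
        exact absurd h1 (hc _ h3)
      | c i => exact absurd hmem (fun h => h)
      | R i => exact absurd hmem (fun h => h)
      | lf k => exact absurd hmem (fun h => h)

include hn

lemma TinDeg_lf (k : Fin n) : (netT n σ).inDeg ((netT n σ).leaf k) = 1 := by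
  rw [Net.inDeg]
  have hkn : (k : ℕ) < n := k.2
  by_cases hk : (k : ℕ) < n - 2
  · cases hσ : σ ⟨k, hk⟩
    · -- taxon k on the d-side
      have hkd : KD σ (n - 3 - (k : ℕ)) := by
        refine ⟨by omega, ?_⟩
        have : (⟨n - 3 - (n - 3 - (k : ℕ)), by omega⟩ : Fin (n-2)) = ⟨k, hk⟩ :=
          Fin.ext (by simp; omega)
        rw [this]; exact hσ
      refine Eq.trans (congrArg Set.ncard ((Set.eq_singleton_iff_unique_mem (a := dElt hkd)).mpr ?_)) (Set.ncard_singleton _)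
      constructor
      · show TE σ (.d ⟨n - 3 - (k : ℕ), hkd.1⟩) (.lf k)
        exact ⟨hkd, Or.inl (by simp; omega)⟩
      · rintro ⟨v, hv⟩ hmem
        cases v with
        | rho =>
          rcases hmem with ⟨h1, -⟩ | ⟨h1, -⟩ <;> omega
        | c i =>
          obtain ⟨h1, h2⟩ := hmem
          rcases h2 with h2 | ⟨h2, -⟩
          · exfalso
            rw [KC_coe] at h1
            have hik : i = ⟨(k : ℕ), hk⟩ := Fin.ext (show (i : ℕ) = (k : ℕ) by omega)
            rw [hik, hσ] at h1
            exact Bool.noConfusion h1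
          · omega
        | d i =>
          obtain ⟨h1, h2⟩ := hmem
          rcases h2 with h2 | ⟨h2, -⟩
          · apply Subtype.ext
            show VV.d i = VV.d ⟨n - 3 - (k : ℕ), hkd.1⟩
            have : (i : ℕ) < n - 2 := i.2
            rw [show i = (⟨n - 3 - (k : ℕ), hkd.1⟩ : Fin (n-2)) from Fin.ext (by simp; omega)]
          · omega
        | R i => exact absurd hmem (fun h => h)
        | lf k' => exact absurd hmem (fun h => h)
    · -- taxon k on the c-side
      have hkc : KC σ (k : ℕ) := ⟨hk, hσ⟩
      refine Eq.trans (congrArg Set.ncard ((Set.eq_singleton_iff_unique_mem (a := cElt hkc)).mpr ?_)) (Set.ncard_singleton _)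
      constructor
      · show TE σ (.c ⟨(k : ℕ), hk⟩) (.lf k)
        exact ⟨hkc, Or.inl rfl⟩
      · rintro ⟨v, hv⟩ hmem
        cases v with
        | rho =>
          rcases hmem with ⟨h1, -⟩ | ⟨h1, -⟩ <;> omega
        | c i =>
          obtain ⟨h1, h2⟩ := hmem
          rcases h2 with h2 | ⟨h2, -⟩
          · apply Subtype.ext
            show VV.c i = VV.c ⟨(k : ℕ), hk⟩
            rw [show i = (⟨(k : ℕ), hk⟩ : Fin (n-2)) from Fin.ext (show (i : ℕ) = (k : ℕ) by omega)]
          · omega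
        | d i =>
          obtain ⟨h1, h2⟩ := hmem
          rcases h2 with h2 | ⟨h2, -⟩
          · exfalso
            have hi2 : (i : ℕ) < n - 2 := i.2
            rw [KD_coe hn] at h1
            have heq : (⟨n - 3 - (i : ℕ), by omega⟩ : Fin (n-2)) = ⟨(k : ℕ), hk⟩ :=
              Fin.ext (show n - 3 - (i : ℕ) = (k : ℕ) by omega)
            rw [heq, hσ] at h1
            exact Bool.noConfusion h1
          · omega
        | R i => exact absurd hmem (fun h => h)
        | lf k' => exact absurd hmem (fun h => h)
  · by_cases hk2 : (k : ℕ) = n - 2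
    · -- the leaf y : parent is the last kept c-node, or the root
      by_cases hex : ∃ l, KC σ l
      · obtain ⟨l, hl⟩ := hex
        obtain ⟨l0, hl1, hl2, hl3⟩ := nat_max (B := n - 2) ⟨l, hl.1, hl⟩
        refine Eq.trans (congrArg Set.ncard ((Set.eq_singleton_iff_unique_mem (a := cElt hl2)).mpr ?_)) (Set.ncard_singleton _)
        constructor
        · show TE σ (.c ⟨l0, hl2.1⟩) (.lf k)
          refine ⟨hl2, Or.inr ⟨hk2, fun l' hl' hKC => ?_⟩⟩
          exact hl3 l' hl' hKC.1 hKC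
        · rintro ⟨v, hv⟩ hmem
          cases v with
          | rho =>
            rcases hmem with ⟨-, h2⟩ | ⟨h1, -⟩
            · exact absurd hl2 (h2 l0)
            · omega
          | c i =>
            obtain ⟨h1, h2⟩ := hmem
            rcases h2 with h2 | ⟨-, h2⟩
            · omega
            · have : (i : ℕ) = l0 := by
                by_contra hne
                rcases Nat.lt_or_ge (i : ℕ) l0 with h | h
                · exact h2 l0 h hl2
                · exact hl3 _ (by omega) i.2 h1
              apply Subtype.ext
              show VV.c i = VV.c ⟨l0, hl2.1⟩
              rw [show i = (⟨l0, hl2.1⟩ : Fin (n-2)) from Fin.ext this]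
          | d i =>
            obtain ⟨h1, h2⟩ := hmem
            have : (i : ℕ) < n - 2 := i.2
            rcases h2 with h2 | ⟨h2, -⟩ <;> omega
          | R i => exact absurd hmem (fun h => h)
          | lf k' => exact absurd hmem (fun h => h)
      · push_neg at hex
        refine Eq.trans (congrArg Set.ncard ((Set.eq_singleton_iff_unique_mem (a := rootT)).mpr ?_)) (Set.ncard_singleton _)
        constructor
        · show TE σ .rho (.lf k)
          exact Or.inl ⟨hk2, hex⟩
        · rintro ⟨v, hv⟩ hmem
          cases v with
          | rho => rfl
          | c i => exact absurd hmem.1 (hex _)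
          | d i =>
            obtain ⟨h1, h2⟩ := hmem
            have : (i : ℕ) < n - 2 := i.2
            rcases h2 with h2 | ⟨h2, -⟩ <;> omega
          | R i => exact absurd hmem (fun h => h)
          | lf k' => exact absurd hmem (fun h => h)
    · -- the leaf y'
      have hk3 : (k : ℕ) = n - 1 := by omega
      by_cases hex : ∃ l, KD σ l
      · obtain ⟨l, hl⟩ := hex
        obtain ⟨l0, hl1, hl2, hl3⟩ := nat_max (B := n - 2) ⟨l, hl.1, hl⟩
        refine Eq.trans (congrArg Set.ncard ((Set.eq_singleton_iff_unique_mem (a := dElt hl2)).mpr ?_)) (Set.ncard_singleton _)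
        constructor
        · show TE σ (.d ⟨l0, hl2.1⟩) (.lf k)
          refine ⟨hl2, Or.inr ⟨hk3, fun l' hl' hKD => ?_⟩⟩
          exact hl3 l' hl' hKD.1 hKD
        · rintro ⟨v, hv⟩ hmem
          cases v with
          | rho =>
            rcases hmem with ⟨h1, -⟩ | ⟨-, h2⟩
            · omega
            · exact absurd hl2 (h2 l0)
          | d i =>
            obtain ⟨h1, h2⟩ := hmem
            rcases h2 with h2 | ⟨-, h2⟩
            · have : (i : ℕ) < n - 2 := i.2
              omega
            · have : (i : ℕ) = l0 := by
                by_contra hne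
                rcases Nat.lt_or_ge (i : ℕ) l0 with h | h
                · exact h2 l0 h hl2
                · exact hl3 _ (by omega) i.2 h1
              apply Subtype.ext
              show VV.d i = VV.d ⟨l0, hl2.1⟩
              rw [show i = (⟨l0, hl2.1⟩ : Fin (n-2)) from Fin.ext this]
          | c i =>
            obtain ⟨h1, h2⟩ := hmem
            have : (i : ℕ) < n - 2 := i.2
            rcases h2 with h2 | ⟨h2, -⟩ <;> omega
          | R i => exact absurd hmem (fun h => h)
          | lf k' => exact absurd hmem (fun h => h)
      · push_neg at hex
        refine Eq.trans (congrArg Set.ncard ((Set.eq_singleton_iff_unique_mem (a := rootT)).mpr ?_)) (Set.ncard_singleton _)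
        constructor
        · show TE σ .rho (.lf k)
          exact Or.inr ⟨hk3, hex⟩
        · rintro ⟨v, hv⟩ hmem
          cases v with
          | rho => rfl
          | d i => exact absurd hmem.1 (hex _)
          | c i =>
            obtain ⟨h1, h2⟩ := hmem
            have : (i : ℕ) < n - 2 := i.2
            rcases h2 with h2 | ⟨h2, -⟩ <;> omega
          | R i => exact absurd hmem (fun h => h)
          | lf k' => exact absurd hmem (fun h => h)

end Part2c
section Part2d
open Relation Set
set_option linter.unusedSectionVars false

variable {n : ℕ} {σ : Fin (n-2) → Bool} (hn : 4 ≤ n)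
include hn

lemma ToutDeg_rho : (netT n σ).outDeg (netT n σ).root = 2 := by
  rw [Net.outDeg]
  by_cases hC : ∃ l, KC σ l
  · obtain ⟨lC, hC1, hC2⟩ := nat_min hC
    by_cases hD : ∃ p, KD σ p
    · obtain ⟨pD, hD1, hD2⟩ := nat_min hD
      have hset : {w : VTt n σ | (netT n σ).E (netT n σ).root w} = {cElt hC1, dElt hD1} := by
        ext w
        constructor
        · intro hmem
          obtain ⟨v, hv⟩ := w
          cases v with
          | rho => exact absurd hmem (fun h => h)
          | c j =>
            obtain ⟨h1, h2⟩ := hmem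
            have hjl : (j : ℕ) = lC := by
              by_contra hne
              rcases Nat.lt_or_ge (j : ℕ) lC with h | h
              · exact hC2 _ h h1
              · exact h2 lC (by omega) hC1
            left
            apply Subtype.ext
            exact congrArg VV.c (Fin.ext hjl)
          | d j =>
            obtain ⟨h1, h2⟩ := hmem
            have hjl : (j : ℕ) = pD := by
              by_contra hne
              rcases Nat.lt_or_ge (j : ℕ) pD with h | h
              · exact hD2 _ h h1
              · exact h2 pD (by omega) hD1
            right
            apply Subtype.ext
            exact congrArg VV.d (Fin.ext hjl)
          | R j => exact absurd hmem (fun h => h)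
          | lf k =>
            rcases hmem with ⟨-, h2⟩ | ⟨-, h2⟩
            · exact absurd hC1 (h2 lC)
            · exact absurd hD1 (h2 pD)
        · rintro (rfl | rfl)
          · exact ⟨hC1, fun l hl => hC2 l hl⟩
          · exact ⟨hD1, fun l hl => hD2 l hl⟩
      rw [hset]
      refine Set.ncard_pair fun hne => ?_
      exact absurd (congrArg Subtype.val hne) (by simp [cElt, dElt])
    · push_neg at hD
      have hset : {w : VTt n σ | (netT n σ).E (netT n σ).root w}
          = {cElt hC1, lfElt ⟨n-1, by omega⟩} := by
        ext w
        constructor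
        · intro hmem
          obtain ⟨v, hv⟩ := w
          cases v with
          | rho => exact absurd hmem (fun h => h)
          | c j =>
            obtain ⟨h1, h2⟩ := hmem
            have hjl : (j : ℕ) = lC := by
              by_contra hne
              rcases Nat.lt_or_ge (j : ℕ) lC with h | h
              · exact hC2 _ h h1
              · exact h2 lC (by omega) hC1
            left
            apply Subtype.ext
            exact congrArg VV.c (Fin.ext hjl)
          | d j => exact absurd hmem.1 (hD _)
          | R j => exact absurd hmem (fun h => h)
          | lf k =>
            rcases hmem with ⟨-, h2⟩ | ⟨h1, -⟩
            · exact absurd hC1 (h2 lC)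
            · right
              apply Subtype.ext
              exact congrArg VV.lf (Fin.ext (show (k : ℕ) = n - 1 from h1))
        · rintro (rfl | rfl)
          · exact ⟨hC1, fun l hl => hC2 l hl⟩
          · exact Or.inr ⟨rfl, hD⟩
      rw [hset]
      refine Set.ncard_pair fun hne => ?_
      exact absurd (congrArg Subtype.val hne) (by simp [cElt, lfElt])
  · push_neg at hC
    by_cases hD : ∃ p, KD σ p
    · obtain ⟨pD, hD1, hD2⟩ := nat_min hD
      have hset : {w : VTt n σ | (netT n σ).E (netT n σ).root w}
          = {lfElt ⟨n-2, by omega⟩, dElt hD1} := by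
        ext w
        constructor
        · intro hmem
          obtain ⟨v, hv⟩ := w
          cases v with
          | rho => exact absurd hmem (fun h => h)
          | c j => exact absurd hmem.1 (hC _)
          | d j =>
            obtain ⟨h1, h2⟩ := hmem
            have hjl : (j : ℕ) = pD := by
              by_contra hne
              rcases Nat.lt_or_ge (j : ℕ) pD with h | h
              · exact hD2 _ h h1
              · exact h2 pD (by omega) hD1
            right
            apply Subtype.ext
            exact congrArg VV.d (Fin.ext hjl)
          | R j => exact absurd hmem (fun h => h)
          | lf k =>
            rcases hmem with ⟨h1, -⟩ | ⟨-, h2⟩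
            · left
              apply Subtype.ext
              exact congrArg VV.lf (Fin.ext (show (k : ℕ) = n - 2 from h1))
            · exact absurd hD1 (h2 pD)
        · rintro (rfl | rfl)
          · exact Or.inl ⟨rfl, hC⟩
          · exact ⟨hD1, fun l hl => hD2 l hl⟩
      rw [hset]
      refine Set.ncard_pair fun hne => ?_
      exact absurd (congrArg Subtype.val hne) (by simp [dElt, lfElt])
    · push_neg at hD
      have hset : {w : VTt n σ | (netT n σ).E (netT n σ).root w}
          = {lfElt ⟨n-2, by omega⟩, lfElt ⟨n-1, by omega⟩} := by
        ext w
        constructor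
        · intro hmem
          obtain ⟨v, hv⟩ := w
          cases v with
          | rho => exact absurd hmem (fun h => h)
          | c j => exact absurd hmem.1 (hC _)
          | d j => exact absurd hmem.1 (hD _)
          | R j => exact absurd hmem (fun h => h)
          | lf k =>
            rcases hmem with ⟨h1, -⟩ | ⟨h1, -⟩
            · left
              apply Subtype.ext
              exact congrArg VV.lf (Fin.ext (show (k : ℕ) = n - 2 from h1))
            · right
              apply Subtype.ext
              exact congrArg VV.lf (Fin.ext (show (k : ℕ) = n - 1 from h1))
        · rintro (rfl | rfl)
          · exact Or.inl ⟨rfl, hC⟩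
          · exact Or.inr ⟨rfl, hD⟩
      rw [hset]
      refine Set.ncard_pair fun hne => ?_
      have h' := congrArg Subtype.val hne
      simp only [lfElt, VV.lf.injEq] at h'
      have := congrArg Fin.val h'
      simp at this
      omega

lemma ToutDeg_c {j : Fin (n-2)} (hj : Kp σ (.c j)) :
    (netT n σ).outDeg ⟨.c j, hj⟩ = 2 := by
  unfold Net.outDeg
  have hjKC : KC σ (j : ℕ) := hj
  have hjlt : (j : ℕ) < n - 2 := j.2
  by_cases hc : ∃ l, (j : ℕ) < l ∧ KC σ l
  · obtain ⟨l0, hl1, hl2⟩ := nat_min hc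
    have hset : {w : VTt n σ | (netT n σ).E ⟨.c j, hj⟩ w}
        = {lfElt ⟨(j : ℕ), by omega⟩, cElt hl1.2} := by
      ext w
      constructor
      · intro hmem
        obtain ⟨v, hv⟩ := w
        cases v with
        | rho => exact absurd hmem (fun h => h)
        | c i =>
          obtain ⟨-, h1, h2, h3⟩ := hmem
          have hil : (i : ℕ) = l0 := by
            by_contra hne
            rcases Nat.lt_or_ge (i : ℕ) l0 with h | h
            · exact hl2 _ h ⟨h2, h1⟩
            · exact h3 l0 hl1.1 (by omega) hl1.2
          right
          apply Subtype.ext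
          exact congrArg VV.c (Fin.ext hil)
        | d i => exact absurd hmem (fun h => h)
        | R i => exact absurd hmem (fun h => h)
        | lf k =>
          obtain ⟨-, h2⟩ := hmem
          rcases h2 with h2 | ⟨-, h2⟩
          · left
            apply Subtype.ext
            exact congrArg VV.lf (Fin.ext (show (k : ℕ) = (j : ℕ) from h2))
          · exact absurd hl1.2 (h2 l0 hl1.1)
      · rintro (rfl | rfl)
        · exact ⟨hjKC, Or.inl rfl⟩
        · exact ⟨hjKC, hl1.2, hl1.1, fun l ha hb => fun hKC => hl2 l hb ⟨ha, hKC⟩⟩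
    rw [hset]
    refine Set.ncard_pair fun hne => ?_
    exact absurd (congrArg Subtype.val hne) (by simp [cElt, lfElt])
  · push_neg at hc
    have hset : {w : VTt n σ | (netT n σ).E ⟨.c j, hj⟩ w}
        = {lfElt ⟨(j : ℕ), by omega⟩, lfElt ⟨n-2, by omega⟩} := by
      ext w
      constructor
      · intro hmem
        obtain ⟨v, hv⟩ := w
        cases v with
        | rho => exact absurd hmem (fun h => h)
        | c i =>
          obtain ⟨-, h1, h2, -⟩ := hmem
          exact absurd h1 (hc _ h2)
        | d i => exact absurd hmem (fun h => h)
        | R i => exact absurd hmem (fun h => h)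
        | lf k =>
          obtain ⟨-, h2⟩ := hmem
          rcases h2 with h2 | ⟨h2, -⟩
          · left
            apply Subtype.ext
            exact congrArg VV.lf (Fin.ext (show (k : ℕ) = (j : ℕ) from h2))
          · right
            apply Subtype.ext
            exact congrArg VV.lf (Fin.ext (show (k : ℕ) = n - 2 from h2))
      · rintro (rfl | rfl)
        · exact ⟨hjKC, Or.inl rfl⟩
        · exact ⟨hjKC, Or.inr ⟨rfl, fun l hl hKC => hc l hl hKC⟩⟩
    rw [hset]
    refine Set.ncard_pair fun hne => ?_
    have h' := congrArg Subtype.val hne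
    simp only [lfElt, VV.lf.injEq] at h'
    have := congrArg Fin.val h'
    simp at this
    omega

lemma ToutDeg_d {j : Fin (n-2)} (hj : Kp σ (.d j)) :
    (netT n σ).outDeg ⟨.d j, hj⟩ = 2 := by
  unfold Net.outDeg
  have hjKD : KD σ (j : ℕ) := hj
  have hjlt : (j : ℕ) < n - 2 := j.2
  by_cases hc : ∃ l, (j : ℕ) < l ∧ KD σ l
  · obtain ⟨l0, hl1, hl2⟩ := nat_min hc
    have hset : {w : VTt n σ | (netT n σ).E ⟨.d j, hj⟩ w}
        = {lfElt ⟨n - 3 - (j : ℕ), by omega⟩, dElt hl1.2} := by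
      ext w
      constructor
      · intro hmem
        obtain ⟨v, hv⟩ := w
        cases v with
        | rho => exact absurd hmem (fun h => h)
        | d i =>
          obtain ⟨-, h1, h2, h3⟩ := hmem
          have hil : (i : ℕ) = l0 := by
            by_contra hne
            rcases Nat.lt_or_ge (i : ℕ) l0 with h | h
            · exact hl2 _ h ⟨h2, h1⟩
            · exact h3 l0 hl1.1 (by omega) hl1.2
          right
          apply Subtype.ext
          exact congrArg VV.d (Fin.ext hil)
        | c i => exact absurd hmem (fun h => h)
        | R i => exact absurd hmem (fun h => h)
        | lf k =>
          obtain ⟨-, h2⟩ := hmem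
          rcases h2 with h2 | ⟨-, h2⟩
          · left
            apply Subtype.ext
            exact congrArg VV.lf (Fin.ext (show (k : ℕ) = n - 3 - (j : ℕ) by omega))
          · exact absurd hl1.2 (h2 l0 hl1.1)
      · rintro (rfl | rfl)
        · exact ⟨hjKD, Or.inl (show (n - 3 - (j : ℕ)) + (j : ℕ) = n - 3 by omega)⟩
        · exact ⟨hjKD, hl1.2, hl1.1, fun l ha hb => fun hKD => hl2 l hb ⟨ha, hKD⟩⟩
    rw [hset]
    refine Set.ncard_pair fun hne => ?_
    exact absurd (congrArg Subtype.val hne) (by simp [dElt, lfElt])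
  · push_neg at hc
    have hset : {w : VTt n σ | (netT n σ).E ⟨.d j, hj⟩ w}
        = {lfElt ⟨n - 3 - (j : ℕ), by omega⟩, lfElt ⟨n-1, by omega⟩} := by
      ext w
      constructor
      · intro hmem
        obtain ⟨v, hv⟩ := w
        cases v with
        | rho => exact absurd hmem (fun h => h)
        | d i =>
          obtain ⟨-, h1, h2, -⟩ := hmem
          exact absurd h1 (hc _ h2)
        | c i => exact absurd hmem (fun h => h)
        | R i => exact absurd hmem (fun h => h)
        | lf k =>
          obtain ⟨-, h2⟩ := hmem
          rcases h2 with h2 | ⟨h2, -⟩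
          · left
            apply Subtype.ext
            exact congrArg VV.lf (Fin.ext (show (k : ℕ) = n - 3 - (j : ℕ) by omega))
          · right
            apply Subtype.ext
            exact congrArg VV.lf (Fin.ext (show (k : ℕ) = n - 1 from h2))
      · rintro (rfl | rfl)
        · exact ⟨hjKD, Or.inl (show (n - 3 - (j : ℕ)) + (j : ℕ) = n - 3 by omega)⟩
        · exact ⟨hjKD, Or.inr ⟨rfl, fun l hl hKD => hc l hl hKD⟩⟩
    rw [hset]
    refine Set.ncard_pair fun hne => ?_
    have h' := congrArg Subtype.val hne
    simp only [lfElt, VV.lf.injEq] at h'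
    have := congrArg Fin.val h'
    simp at this
    omega

end Part2d
section Part2e
open Relation Set
set_option linter.unusedSectionVars false

variable {n : ℕ} {σ : Fin (n-2) → Bool} (hn : 4 ≤ n)
include hn

lemma TE_rnk {u v : VV n} (h : TE σ u v) : rnk u < rnk v := by
  cases u <;> cases v <;> simp [TE, rnk] at h ⊢ <;>
    first
    | omega
    | (obtain ⟨-, -, h3, -⟩ := h; omega)
    | (rename_i i j; have : (i : ℕ) < n - 2 := i.2; omega)

lemma netT_acyclic : (netT n σ).Acyclic := by
  intro v hv
  have key : ∀ a b : VTt n σ, Relation.TransGen (netT n σ).E a b → rnk a.val < rnk b.val := by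
    intro a b h
    induction h with
    | single h => exact TE_rnk hn h
    | tail _ h ih => exact lt_trans ih (TE_rnk hn h)
  exact absurd (key v v hv) (lt_irrefl _)

lemma reachT_c : ∀ (l : ℕ) (hl : KC σ l),
    Relation.ReflTransGen (netT n σ).E (netT n σ).root (cElt hl) := by
  intro l
  induction l using Nat.strong_induction_on with
  | _ l ih =>
    intro hl
    by_cases hc : ∃ l', l' < l ∧ KC σ l'
    · obtain ⟨l0, hl0, h2, h3⟩ := nat_max hc
      exact (ih l0 hl0 h2).tail
        (show TE σ (VV.c ⟨l0, h2.1⟩) (VV.c ⟨l, hl.1⟩) from ⟨h2, hl, hl0, h3⟩)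
    · push_neg at hc
      exact Relation.ReflTransGen.single
        (show TE σ VV.rho (VV.c ⟨l, hl.1⟩) from ⟨hl, hc⟩)

lemma reachT_d : ∀ (l : ℕ) (hl : KD σ l),
    Relation.ReflTransGen (netT n σ).E (netT n σ).root (dElt hl) := by
  intro l
  induction l using Nat.strong_induction_on with
  | _ l ih =>
    intro hl
    by_cases hc : ∃ l', l' < l ∧ KD σ l'
    · obtain ⟨l0, hl0, h2, h3⟩ := nat_max hc
      exact (ih l0 hl0 h2).tail
        (show TE σ (VV.d ⟨l0, h2.1⟩) (VV.d ⟨l, hl.1⟩) from ⟨h2, hl, hl0, h3⟩)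
    · push_neg at hc
      exact Relation.ReflTransGen.single
        (show TE σ VV.rho (VV.d ⟨l, hl.1⟩) from ⟨hl, hc⟩)

lemma reachT : ∀ v : VTt n σ, Relation.ReflTransGen (netT n σ).E (netT n σ).root v := by
  rintro ⟨v, hv⟩
  cases v with
  | rho => exact Relation.ReflTransGen.refl
  | c i => exact reachT_c hn (i : ℕ) hv
  | d i => exact reachT_d hn (i : ℕ) hv
  | R i => exact hv.elim
  | lf k =>
    by_cases hk : (k : ℕ) < n - 2
    · cases hσ : σ ⟨k, hk⟩ with
      | false =>
        have hkd : KD σ (n - 3 - (k : ℕ)) := by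
          refine ⟨by omega, ?_⟩
          have heq : (⟨n - 3 - (n - 3 - (k : ℕ)), by omega⟩ : Fin (n-2)) = ⟨k, hk⟩ :=
            Fin.ext (by simp; omega)
          rw [heq]; exact hσ
        exact (reachT_d hn _ hkd).tail
          (show TE σ (VV.d ⟨n - 3 - (k : ℕ), hkd.1⟩) (VV.lf k) from
            ⟨hkd, Or.inl (show (k : ℕ) + (n - 3 - (k : ℕ)) = n - 3 by omega)⟩)
      | true =>
        have hkc : KC σ (k : ℕ) := ⟨hk, hσ⟩
        exact (reachT_c hn _ hkc).tail
          (show TE σ (VV.c ⟨(k : ℕ), hk⟩) (VV.lf k) from ⟨hkc, Or.inl rfl⟩)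
    · by_cases hk2 : (k : ℕ) = n - 2
      · by_cases hex : ∃ l, KC σ l
        · obtain ⟨l, hl⟩ := hex
          obtain ⟨l0, hl1, hl2, hl3⟩ := nat_max (B := n - 2) ⟨l, hl.1, hl⟩
          exact (reachT_c hn _ hl2).tail
            (show TE σ (VV.c ⟨l0, hl2.1⟩) (VV.lf k) from
              ⟨hl2, Or.inr ⟨hk2, fun l' h' hK => hl3 l' h' hK.1 hK⟩⟩)
        · push_neg at hex
          exact Relation.ReflTransGen.single
            (show TE σ VV.rho (VV.lf k) from Or.inl ⟨hk2, hex⟩)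
      · have hk3 : (k : ℕ) = n - 1 := by have := k.2; omega
        by_cases hex : ∃ l, KD σ l
        · obtain ⟨l, hl⟩ := hex
          obtain ⟨l0, hl1, hl2, hl3⟩ := nat_max (B := n - 2) ⟨l, hl.1, hl⟩
          exact (reachT_d hn _ hl2).tail
            (show TE σ (VV.d ⟨l0, hl2.1⟩) (VV.lf k) from
              ⟨hl2, Or.inr ⟨hk3, fun l' h' hK => hl3 l' h' hK.1 hK⟩⟩)
        · push_neg at hex
          exact Relation.ReflTransGen.single
            (show TE σ VV.rho (VV.lf k) from Or.inr ⟨hk3, hex⟩)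

lemma netT_tree : (netT n σ).IsBinaryTree := by
  have hin : ∀ v : VTt n σ, (netT n σ).inDeg v ≤ 1 := by
    rintro ⟨v, hv⟩
    cases v with
    | rho =>
      have h0 : (netT n σ).inDeg (netT n σ).root = 0 := TinDeg_rho
      rw [show ((netT n σ).root) = (⟨VV.rho, hv⟩ : VTt n σ) from rfl] at h0
      omega
    | c i => rw [TinDeg_c hv]
    | d i => rw [TinDeg_d hv]
    | R i => exact hv.elim
    | lf k =>
      have h0 : (netT n σ).inDeg ((netT n σ).leaf k) = 1 := TinDeg_lf hn k
      rw [show ((netT n σ).leaf k) = (⟨VV.lf k, hv⟩ : VTt n σ) from rfl] at h0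
      omega
  refine ⟨⟨⟨netT_acyclic hn, TinDeg_rho, reachT hn, ?_, ?_, ?_, TinDeg_lf hn⟩, ?_⟩, hin⟩
  · intro x y h
    have h2 : VV.lf x = VV.lf y := congrArg Subtype.val h
    exact VV.lf.inj h2
  · intro x
    rw [Net.IsLeaf]
    exact ToutDeg_lf x
  · rintro ⟨v, hv⟩ hlf
    unfold Net.IsLeaf at hlf
    cases v with
    | rho =>
      have h2 : (netT n σ).outDeg (netT n σ).root = 2 := ToutDeg_rho hn
      rw [show ((netT n σ).root) = (⟨VV.rho, hv⟩ : VTt n σ) from rfl] at h2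
      omega
    | c i => rw [ToutDeg_c hn hv] at hlf; omega
    | d i => rw [ToutDeg_d hn hv] at hlf; omega
    | R i => exact hv.elim
    | lf k => exact ⟨k, rfl⟩
  · rintro ⟨v, hv⟩ hnl
    cases v with
    | rho =>
      refine Or.inl ⟨?_, ?_⟩
      · have h0 : (netT n σ).inDeg (netT n σ).root = 0 := TinDeg_rho
        rw [show ((netT n σ).root) = (⟨VV.rho, hv⟩ : VTt n σ) from rfl] at h0
        omega
      · have h2 : (netT n σ).outDeg (netT n σ).root = 2 := ToutDeg_rho hn
        rw [show ((netT n σ).root) = (⟨VV.rho, hv⟩ : VTt n σ) from rfl] at h2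
        exact h2
    | c i => exact Or.inl ⟨by rw [TinDeg_c hv], ToutDeg_c hn hv⟩
    | d i => exact Or.inl ⟨by rw [TinDeg_d hv], ToutDeg_d hn hv⟩
    | R i => exact hv.elim
    | lf k =>
      exfalso
      apply hnl
      unfold Net.IsLeaf
      have h0 : (netT n σ).outDeg ((netT n σ).leaf k) = 0 := ToutDeg_lf k
      rw [show ((netT n σ).leaf k) = (⟨VV.lf k, hv⟩ : VTt n σ) from rfl] at h0
      exact h0

end Part2e
section Part2f
open Relation Set
set_option linter.unusedSectionVars false

variable {n : ℕ} {σ : Fin (n-2) → Bool} (hn : 4 ≤ n)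

lemma rangeφ : Set.range (Subtype.val : VTt n σ → VV n) = {v | Kp σ v} :=
  Subtype.range_val

include hn

lemma walk_c (b : VV n) : ∀ (j : ℕ) (hj : j < n - 2) (i : ℕ) (hij : i ≤ j)
    (hi : i < n - 2)
    (hint : ∀ l (h1 : i < l) (h2 : l ≤ j), (VV.c ⟨l, by omega⟩ : VV n) = b ∨ ¬ KC σ l),
    Relation.ReflTransGen (fun u v => Sσ n σ u v ∧ (v = b ∨ ¬ Kp σ v))
      (VV.c ⟨i, hi⟩) (VV.c ⟨j, hj⟩) := by
  intro j
  induction j with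
  | zero =>
    intro hj i hij hi _
    have : i = 0 := by omega
    subst this
    exact Relation.ReflTransGen.refl
  | succ j ih =>
    intro hj i hij hi hint
    by_cases he : i = j + 1
    · subst he
      exact Relation.ReflTransGen.refl
    · have hij' : i ≤ j := by omega
      refine Relation.ReflTransGen.tail
        (ih (by omega) i hij' hi (fun l h1 h2 => hint l h1 (by omega))) ?_
      refine ⟨by simp [Sσ], ?_⟩
      have := hint (j+1) (by omega) (le_refl _)
      rcases this with h | h
      · exact Or.inl h
      · exact Or.inr h

lemma walk_d (b : VV n) : ∀ (j : ℕ) (hj : j < n - 2) (i : ℕ) (hij : i ≤ j)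
    (hi : i < n - 2)
    (hint : ∀ l (h1 : i < l) (h2 : l ≤ j), (VV.d ⟨l, by omega⟩ : VV n) = b ∨ ¬ KD σ l),
    Relation.ReflTransGen (fun u v => Sσ n σ u v ∧ (v = b ∨ ¬ Kp σ v))
      (VV.d ⟨i, hi⟩) (VV.d ⟨j, hj⟩) := by
  intro j
  induction j with
  | zero =>
    intro hj i hij hi _
    have : i = 0 := by omega
    subst this
    exact Relation.ReflTransGen.refl
  | succ j ih =>
    intro hj i hij hi hint
    by_cases he : i = j + 1
    · subst he
      exact Relation.ReflTransGen.refl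
    · have hij' : i ≤ j := by omega
      refine Relation.ReflTransGen.tail
        (ih (by omega) i hij' hi (fun l h1 h2 => hint l h1 (by omega))) ?_
      refine ⟨by simp [Sσ], ?_⟩
      have := hint (j+1) (by omega) (le_refl _)
      rcases this with h | h
      · exact Or.inl h
      · exact Or.inr h

lemma disp_path (a b : VTt n σ) (hab : (netT n σ).E a b) :
    pathAvoid (Sσ n σ) (Set.range (Subtype.val : VTt n σ → VV n)) a.val b.val := by
  rw [pathAvoid]
  have hmono : ∀ u v : VV n,
      (Sσ n σ u v ∧ (v = b.val ∨ ¬ Kp σ v)) →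
      (Sσ n σ u v ∧ (v = b.val ∨ v ∉ Set.range (Subtype.val : VTt n σ → VV n))) := by
    intro u v ⟨h1, h2⟩
    refine ⟨h1, ?_⟩
    rcases h2 with h | h
    · exact Or.inl h
    · exact Or.inr (by rw [rangeφ]; exact h)
  refine Relation.ReflTransGen.mono hmono _ _ ?_
  obtain ⟨va, ha⟩ := a
  obtain ⟨vb, hb⟩ := b
  cases va with
  | rho =>
    cases vb with
    | c j =>
      obtain ⟨h1, h2⟩ := hab
      have hj2 : (j : ℕ) < n - 2 := j.2
      have hw := walk_c hn (VV.c j) (j : ℕ) j.2 0 (by omega) (by omega)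
        (fun l hl1 hl2 => by
          rcases Nat.lt_or_ge l (j : ℕ) with h | h
          · exact Or.inr (h2 l h)
          · have : l = (j : ℕ) := by omega
            subst this
            exact Or.inl (congrArg VV.c (Fin.ext rfl)))
      by_cases h0 : (j : ℕ) = 0
      · exact Relation.ReflTransGen.single
          ⟨by simp [Sσ, h0], Or.inl (congrArg VV.c (Fin.ext (by simp [h0])))⟩
      · refine Relation.ReflTransGen.head (b := VV.c ⟨0, by omega⟩) ⟨by simp [Sσ], Or.inr ?_⟩ ?_
        · show ¬ KC σ 0
          exact h2 0 (by omega)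
        · exact hw
    | d j =>
      obtain ⟨h1, h2⟩ := hab
      have hj2 : (j : ℕ) < n - 2 := j.2
      have hw := walk_d hn (VV.d j) (j : ℕ) j.2 0 (by omega) (by omega)
        (fun l hl1 hl2 => by
          rcases Nat.lt_or_ge l (j : ℕ) with h | h
          · exact Or.inr (h2 l h)
          · have : l = (j : ℕ) := by omega
            subst this
            exact Or.inl (congrArg VV.d (Fin.ext rfl)))
      by_cases h0 : (j : ℕ) = 0
      · exact Relation.ReflTransGen.single
          ⟨by simp [Sσ, h0], Or.inl (congrArg VV.d (Fin.ext (by simp [h0])))⟩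
      · refine Relation.ReflTransGen.head (b := VV.d ⟨0, by omega⟩) ⟨by simp [Sσ], Or.inr ?_⟩ ?_
        · show ¬ KD σ 0
          exact h2 0 (by omega)
        · exact hw
    | lf k =>
      rcases hab with ⟨hk, h2⟩ | ⟨hk, h2⟩
      · -- to the leaf y along the whole c chain
        refine Relation.ReflTransGen.head (b := VV.c ⟨0, by omega⟩)
          ⟨by simp [Sσ], Or.inr (h2 0)⟩ ?_
        refine Relation.ReflTransGen.tail
          (walk_c hn (VV.lf k) (n-3) (by omega) 0 (by omega) (by omega)
            (fun l h1 hl2 => Or.inr (h2 l))) ?_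
        exact ⟨by simp [Sσ]; omega, Or.inl rfl⟩
      · refine Relation.ReflTransGen.head (b := VV.d ⟨0, by omega⟩)
          ⟨by simp [Sσ], Or.inr (h2 0)⟩ ?_
        refine Relation.ReflTransGen.tail
          (walk_d hn (VV.lf k) (n-3) (by omega) 0 (by omega) (by omega)
            (fun l h1 hl2 => Or.inr (h2 l))) ?_
        exact ⟨by simp [Sσ]; omega, Or.inl rfl⟩
    | rho => exact absurd hab (by simp [netT, TE])
    | R j => exact absurd hab (by simp [netT, TE])
  | c i =>
    cases vb with
    | c j =>
      obtain ⟨h1, h2, h3, h4⟩ := hab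
      have hw := walk_c hn (VV.c j) (j : ℕ) j.2 (i : ℕ) (by omega) i.2
        (fun l hl1 hl2 => by
          rcases Nat.lt_or_ge l (j : ℕ) with h | h
          · exact Or.inr (h4 l hl1 h)
          · have : l = (j : ℕ) := by omega
            subst this
            exact Or.inl (congrArg VV.c (Fin.ext rfl)))
      have e1 : (VV.c ⟨(i : ℕ), i.2⟩ : VV n) = VV.c i := congrArg VV.c (Fin.ext rfl)
      have e2 : (VV.c ⟨(j : ℕ), j.2⟩ : VV n) = VV.c j := congrArg VV.c (Fin.ext rfl)
      rw [e1, e2] at hw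
      exact hw
    | lf k =>
      obtain ⟨h1, h2⟩ := hab
      have hσi : σ i = true := KC_coe.mp h1
      rcases h2 with h2 | ⟨h2, h3⟩
      · -- own leaf via the reticulation
        refine Relation.ReflTransGen.head (b := VV.R i) ⟨?_, Or.inr (fun h => h)⟩
          (Relation.ReflTransGen.single ⟨?_, Or.inl rfl⟩)
        · show Sσ n σ (VV.c i) (VV.R i)
          exact ⟨rfl, hσi⟩
        · show Sσ n σ (VV.R i) (VV.lf k)
          exact h2
      · -- the leaf y, walking to the end of the c chain
        have hi3 : (i : ℕ) ≤ n - 3 := by have := i.2; omega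
        refine Relation.ReflTransGen.tail
          (?_ : Relation.ReflTransGen _ _ (VV.c ⟨n-3, by omega⟩)) ?_
        · have hw := walk_c hn (VV.lf k) (n-3) (by omega) (i : ℕ) hi3 i.2
            (fun l hl1 hl2 => Or.inr (h3 l hl1))
          have e1 : (VV.c ⟨(i : ℕ), i.2⟩ : VV n) = VV.c i := congrArg VV.c (Fin.ext rfl)
          rw [e1] at hw
          exact hw
        · exact ⟨by simp [Sσ]; omega, Or.inl rfl⟩
    | rho => exact absurd hab (by simp [netT, TE])
    | d j => exact absurd hab (by simp [netT, TE])
    | R j => exact absurd hab (by simp [netT, TE])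
  | d i =>
    cases vb with
    | d j =>
      obtain ⟨h1, h2, h3, h4⟩ := hab
      have hw := walk_d hn (VV.d j) (j : ℕ) j.2 (i : ℕ) (by omega) i.2
        (fun l hl1 hl2 => by
          rcases Nat.lt_or_ge l (j : ℕ) with h | h
          · exact Or.inr (h4 l hl1 h)
          · have : l = (j : ℕ) := by omega
            subst this
            exact Or.inl (congrArg VV.d (Fin.ext rfl)))
      have e1 : (VV.d ⟨(i : ℕ), i.2⟩ : VV n) = VV.d i := congrArg VV.d (Fin.ext rfl)
      have e2 : (VV.d ⟨(j : ℕ), j.2⟩ : VV n) = VV.d j := congrArg VV.d (Fin.ext rfl)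
      rw [e1, e2] at hw
      exact hw
    | lf k =>
      obtain ⟨h1, h2⟩ := hab
      have hσi : σ ⟨n - 3 - (i : ℕ), by omega⟩ = false := (KD_coe hn).mp h1
      rcases h2 with h2 | ⟨h2, h3⟩
      · refine Relation.ReflTransGen.head (b := VV.R ⟨n - 3 - (i : ℕ), by omega⟩)
          ⟨?_, Or.inr (fun h => h)⟩
          (Relation.ReflTransGen.single ⟨?_, Or.inl rfl⟩)
        · show Sσ n σ (VV.d i) (VV.R ⟨n - 3 - (i : ℕ), by omega⟩)
          exact ⟨by simp; omega, hσi⟩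
        · show Sσ n σ (VV.R ⟨n - 3 - (i : ℕ), by omega⟩) (VV.lf k)
          show (k : ℕ) = n - 3 - (i : ℕ)
          omega
      · have hi3 : (i : ℕ) ≤ n - 3 := by have := i.2; omega
        refine Relation.ReflTransGen.tail
          (?_ : Relation.ReflTransGen _ _ (VV.d ⟨n-3, by omega⟩)) ?_
        · have hw := walk_d hn (VV.lf k) (n-3) (by omega) (i : ℕ) hi3 i.2
            (fun l hl1 hl2 => Or.inr (h3 l hl1))
          have e1 : (VV.d ⟨(i : ℕ), i.2⟩ : VV n) = VV.d i := congrArg VV.d (Fin.ext rfl)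
          rw [e1] at hw
          exact hw
        · exact ⟨by simp [Sσ]; omega, Or.inl rfl⟩
    | rho => exact absurd hab (by simp [netT, TE])
    | c j => exact absurd hab (by simp [netT, TE])
    | R j => exact absurd hab (by simp [netT, TE])
  | R i => exact ha.elim
  | lf k => exact absurd hab (by cases vb <;> simp [netT, TE])

lemma disp_deg (a : VTt n σ) :
    {w | Sσ n σ a.val w}.ncard = (netT n σ).outDeg a ∧
    {u | Sσ n σ u a.val}.ncard = (netT n σ).inDeg a := by
  obtain ⟨v, hv⟩ := a
  cases v with
  | rho =>
    constructor
    · rw [show ((⟨VV.rho, hv⟩ : VTt n σ)) = (netT n σ).root from rfl, ToutDeg_rho hn]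
      show {w | Sσ n σ VV.rho w}.ncard = 2
      rw [outS_rho hn]
      exact Set.ncard_pair (by simp)
    · rw [show ((⟨VV.rho, hv⟩ : VTt n σ)) = (netT n σ).root from rfl, TinDeg_rho]
      show {u | Sσ n σ u VV.rho}.ncard = 0
      rw [inS_rho hn, Set.ncard_empty]
  | c i =>
    have hσi : σ i = true := KC_coe.mp hv
    constructor
    · rw [ToutDeg_c hn hv]
      show {w | Sσ n σ (VV.c i) w}.ncard = 2
      rw [outS_c_t hn hσi]
      refine Set.ncard_pair ?_
      rw [cnxt]
      split_ifs <;> simp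
    · rw [TinDeg_c hv]
      show {u | Sσ n σ u (VV.c i)}.ncard = 1
      rw [inS_c hn i, Set.ncard_singleton]
  | d i =>
    have hσi : σ ⟨n - 3 - (i : ℕ), by omega⟩ = false := (KD_coe hn).mp hv
    constructor
    · rw [ToutDeg_d hn hv]
      show {w | Sσ n σ (VV.d i) w}.ncard = 2
      rw [outS_d_t hn hσi]
      refine Set.ncard_pair ?_
      rw [dnxt]
      split_ifs <;> simp
    · rw [TinDeg_d hv]
      show {u | Sσ n σ u (VV.d i)}.ncard = 1
      rw [inS_d hn i, Set.ncard_singleton]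
  | R i => exact hv.elim
  | lf k =>
    constructor
    · rw [show ((⟨VV.lf k, hv⟩ : VTt n σ)) = (netT n σ).leaf k from rfl, ToutDeg_lf]
      show {w | Sσ n σ (VV.lf k) w}.ncard = 0
      rw [outS_lf hn k, Set.ncard_empty]
    · rw [show ((⟨VV.lf k, hv⟩ : VTt n σ)) = (netT n σ).leaf k from rfl, TinDeg_lf hn]
      show {u | Sσ n σ u (VV.lf k)}.ncard = 1
      rw [inS_lf hn k, Set.ncard_singleton]

lemma disp_supp (v : VV n) (hv : v ∉ Set.range (Subtype.val : VTt n σ → VV n)) :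
    {w | Sσ n σ v w}.ncard = 1 ∧ {u | Sσ n σ u v}.ncard = 1 := by
  rw [rangeφ] at hv
  cases v with
  | rho => exact absurd trivial hv
  | lf k => exact absurd trivial hv
  | c i =>
    have hσi : σ i = false := by
      rcases Bool.eq_false_or_eq_true (σ i) with h | h
      · exact absurd (KC_coe.mpr h) hv
      · exact h
    constructor
    · rw [outS_c_f hn hσi, Set.ncard_singleton]
    · rw [inS_c hn i, Set.ncard_singleton]
  | d i =>
    have hσi : σ ⟨n - 3 - (i : ℕ), by omega⟩ = true := by
      rcases Bool.eq_false_or_eq_true (σ ⟨n - 3 - (i : ℕ), by omega⟩) with h | h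
      · exact h
      · exact absurd ((KD_coe hn).mpr h) hv
    constructor
    · rw [outS_d_f hn hσi, Set.ncard_singleton]
    · rw [inS_d hn i, Set.ncard_singleton]
  | R i =>
    constructor
    · rw [outS_R hn i, Set.ncard_singleton]
    · rcases Bool.eq_false_or_eq_true (σ i) with h | h
      · rw [inS_R_t hn h, Set.ncard_singleton]
      · rw [inS_R_f hn h, Set.ncard_singleton]

lemma netT_display : Display (netT n σ) (netN n) := by
  refine ⟨Sσ n σ, Subtype.val, Ssub hn, Subtype.val_injective, fun x => rfl,
    ?_, ?_, ?_⟩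
  · intro a b hab
    exact disp_path hn a b hab
  · intro a
    exact disp_deg hn a
  · intro v hv _
    exact disp_supp hn v hv

end Part2f
section Part2g
open Relation Set
set_option linter.unusedSectionVars false

variable {n : ℕ}

def emb (hn : 4 ≤ n) (i : Fin (n-2)) : Fin n := ⟨i, by omega⟩
def yI (hn : 4 ≤ n) : Fin n := ⟨n-2, by omega⟩
def yI' (hn : 4 ≤ n) : Fin n := ⟨n-1, by omega⟩

variable (hn : 4 ≤ n)
include hn

lemma displays_lt {j k : Fin (n-2)} (hjk : (j : ℕ) < (k : ℕ)) :
    Displays3Subtree (netN n) (emb hn k) (yI hn) (emb hn j) := by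
  set σ : Fin (n-2) → Bool := fun i => decide ((i : ℕ) = (j : ℕ) ∨ (i : ℕ) = (k : ℕ)) with hσ
  have hKC : ∀ l, KC σ l ↔ (l < n - 2 ∧ (l = (j : ℕ) ∨ l = (k : ℕ))) := by
    intro l
    constructor
    · rintro ⟨h, e⟩
      exact ⟨h, by simpa [hσ] using e⟩
    · rintro ⟨h, e⟩
      exact ⟨h, by simpa [hσ] using e⟩
  have hkj : Kp σ (VV.c j) := by
    show KC σ (j : ℕ)
    exact (hKC _).mpr ⟨j.2, Or.inl rfl⟩
  have hkk : Kp σ (VV.c k) := by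
    show KC σ (k : ℕ)
    exact (hKC _).mpr ⟨k.2, Or.inr rfl⟩
  refine ⟨VTt n σ, netT n σ, inferInstance, netT_tree hn, netT_display hn, ?_, ?_, ?_,
    ⟨VV.c j, hkj⟩, ⟨VV.c k, hkk⟩, ?_, ?_, ?_, ?_⟩
  · intro h
    have := congrArg Fin.val h
    simp [emb, yI] at this
    omega
  · intro h
    have := congrArg Fin.val h
    simp [emb] at this
    omega
  · intro h
    have := congrArg Fin.val h
    simp [emb, yI] at this
    omega
  · show TE σ (VV.c j) (VV.c k)
    refine ⟨hkj, hkk, hjk, fun l h1 h2 hl => ?_⟩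
    rw [hKC] at hl
    omega
  · show TE σ (VV.c j) (VV.lf (emb hn j))
    exact ⟨hkj, Or.inl rfl⟩
  · show TE σ (VV.c k) (VV.lf (emb hn k))
    exact ⟨hkk, Or.inl rfl⟩
  · show TE σ (VV.c k) (VV.lf (yI hn))
    refine ⟨hkk, Or.inr ⟨rfl, fun l h1 hl => ?_⟩⟩
    rw [hKC] at hl
    omega

lemma displays_gt {j k : Fin (n-2)} (hjk : (k : ℕ) < (j : ℕ)) :
    Displays3Subtree (netN n) (emb hn k) (yI' hn) (emb hn j) := by
  set σ : Fin (n-2) → Bool :=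
    fun i => decide ((i : ℕ) ≠ (j : ℕ) ∧ (i : ℕ) ≠ (k : ℕ)) with hσ
  have hKD : ∀ p, KD σ p ↔ (p < n - 2 ∧ (n - 3 - p = (j : ℕ) ∨ n - 3 - p = (k : ℕ))) := by
    intro p
    constructor
    · rintro ⟨h, e⟩
      refine ⟨h, ?_⟩
      have h2 : ¬ (n - 3 - p ≠ (j : ℕ) ∧ n - 3 - p ≠ (k : ℕ)) := of_decide_eq_false e
      omega
    · rintro ⟨h, e⟩
      refine ⟨h, decide_eq_false ?_⟩
      show ¬ (n - 3 - p ≠ (j : ℕ) ∧ n - 3 - p ≠ (k : ℕ))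
      omega
  have hj2 : (j : ℕ) < n - 2 := j.2
  have hk2 : (k : ℕ) < n - 2 := k.2
  have hkj : Kp σ (VV.d ⟨n - 3 - (j : ℕ), by omega⟩) := by
    show KD σ (n - 3 - (j : ℕ))
    refine (hKD _).mpr ⟨by omega, Or.inl (by omega)⟩
  have hkk : Kp σ (VV.d ⟨n - 3 - (k : ℕ), by omega⟩) := by
    show KD σ (n - 3 - (k : ℕ))
    refine (hKD _).mpr ⟨by omega, Or.inr (by omega)⟩
  refine ⟨VTt n σ, netT n σ, inferInstance, netT_tree hn, netT_display hn, ?_, ?_, ?_,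
    ⟨VV.d ⟨n - 3 - (j : ℕ), by omega⟩, hkj⟩, ⟨VV.d ⟨n - 3 - (k : ℕ), by omega⟩, hkk⟩,
    ?_, ?_, ?_, ?_⟩
  · intro h
    have := congrArg Fin.val h
    simp [emb, yI'] at this
    omega
  · intro h
    have := congrArg Fin.val h
    simp [emb] at this
    omega
  · intro h
    have := congrArg Fin.val h
    simp [emb, yI'] at this
    omega
  · show TE σ (VV.d ⟨n - 3 - (j : ℕ), by omega⟩) (VV.d ⟨n - 3 - (k : ℕ), by omega⟩)
    refine ⟨hkj, hkk, show n - 3 - (j : ℕ) < n - 3 - (k : ℕ) by omega,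
      fun l h1 h2 hl => ?_⟩
    have h1' : n - 3 - (j : ℕ) < l := h1
    have h2' : l < n - 3 - (k : ℕ) := h2
    rw [hKD] at hl
    omega
  · show TE σ (VV.d ⟨n - 3 - (j : ℕ), by omega⟩) (VV.lf (emb hn j))
    refine ⟨hkj, Or.inl ?_⟩
    show (j : ℕ) + (n - 3 - (j : ℕ)) = n - 3
    omega
  · show TE σ (VV.d ⟨n - 3 - (k : ℕ), by omega⟩) (VV.lf (emb hn k))
    refine ⟨hkk, Or.inl ?_⟩
    show (k : ℕ) + (n - 3 - (k : ℕ)) = n - 3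
    omega
  · show TE σ (VV.d ⟨n - 3 - (k : ℕ), by omega⟩) (VV.lf (yI' hn))
    refine ⟨hkk, Or.inr ⟨rfl, fun l h1 hl => ?_⟩⟩
    have h1' : n - 3 - (k : ℕ) < l := h1
    rw [hKD] at hl
    omega

lemma part2_main : ∃ (V : Type) (_ : Fintype V) (N : Net V (Fin n)),
    N.IsBinaryNet ∧ N.TreeChild ∧
    (n - 2) * (n - 3) ≤
      {q : Sym2 (Fin n) × Fin n |
        ∃ a b, q.1 = s(a, b) ∧ Displays3Subtree N a b q.2}.ncard := by
  classical
  refine ⟨VV n, inferInstance, netN n, netN_binary hn, netN_treeChild hn, ?_⟩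
  set Q2 : Set (Sym2 (Fin n) × Fin n) :=
    {q | ∃ a b, q.1 = s(a, b) ∧ Displays3Subtree (netN n) a b q.2} with hQ2
  set g : Fin (n-2) × Fin (n-2) → Sym2 (Fin n) × Fin n :=
    fun p => (s(emb hn p.2, if (p.1 : ℕ) < (p.2 : ℕ) then yI hn else yI' hn), emb hn p.1)
    with hg
  set P : Set (Fin (n-2) × Fin (n-2)) := {p | p.1 ≠ p.2} with hP
  -- the image lands in Q2
  have himg : g '' P ⊆ Q2 := by
    rintro q ⟨⟨j, k⟩, hjk, rfl⟩
    have hjk' : (j : ℕ) ≠ (k : ℕ) := fun h => hjk (Fin.ext h)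
    refine ⟨emb hn k, if (j : ℕ) < (k : ℕ) then yI hn else yI' hn, rfl, ?_⟩
    rcases Nat.lt_or_ge (j : ℕ) (k : ℕ) with h | h
    · rw [if_pos h]
      exact displays_lt hn h
    · have h' : (k : ℕ) < (j : ℕ) := by omega
      rw [if_neg (by omega)]
      exact displays_gt hn h'
  -- g is injective on P
  have hinj : Set.InjOn g P := by
    rintro ⟨j, k⟩ - ⟨j', k'⟩ - heq
    rw [hg, Prod.mk.injEq] at heq
    obtain ⟨h1, h2⟩ := heq
    have hj : j = j' := by
      apply Fin.ext
      have := congrArg Fin.val h2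
      simpa [emb] using this
    subst hj
    have hk : k = k' := by
      rcases Sym2.eq_iff.mp h1 with ⟨ha, -⟩ | ⟨ha, hb⟩
      · apply Fin.ext
        have := congrArg Fin.val ha
        simpa [emb] using this
      · exfalso
        have hav := congrArg Fin.val ha
        have hbv := congrArg Fin.val hb
        have h3 : (k : ℕ) < n - 2 := k.2
        have h4 : (k' : ℕ) < n - 2 := k'.2
        split_ifs at hav hbv <;> simp [emb, yI, yI'] at hav hbv <;> omega
    rw [hk]
  -- the cardinality of P
  have hPcard : P.ncard = (n - 2) * (n - 3) := by
    rw [hP, Set.ncard_eq_toFinset_card', Set.toFinset_setOf]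
    have hdiag : Finset.univ.filter (fun p : Fin (n-2) × Fin (n-2) => p.1 = p.2)
        = Finset.univ.image (fun i : Fin (n-2) => (i, i)) := by
      ext ⟨a, b⟩
      simp only [Finset.mem_filter, Finset.mem_univ, true_and, Finset.mem_image]
      constructor
      · rintro rfl
        exact ⟨a, rfl⟩
      · rintro ⟨i, h⟩
        rw [Prod.mk.injEq] at h
        rw [← h.1, ← h.2]

    have hdcard : (Finset.univ.filter (fun p : Fin (n-2) × Fin (n-2) => p.1 = p.2)).card
        = n - 2 := by
      rw [hdiag, Finset.card_image_of_injective _ (fun a b h => (Prod.mk.injEq .. ▸ h).1),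
        Finset.card_univ, Fintype.card_fin]
    have htot := Finset.card_filter_add_card_filter_not
      (s := (Finset.univ : Finset (Fin (n-2) × Fin (n-2))))
      (p := fun p => p.1 = p.2)
    rw [Finset.card_univ, Fintype.card_prod, Fintype.card_fin] at htot
    have harith : (n - 2) * (n - 3) + (n - 2) = (n - 2) * (n - 2) := by
      have e : n - 3 + 1 = n - 2 := by omega
      calc (n - 2) * (n - 3) + (n - 2) = (n - 2) * ((n - 3) + 1) := by ring
        _ = (n - 2) * (n - 2) := by rw [e]
    have : (Finset.univ.filter (fun p : Fin (n-2) × Fin (n-2) => ¬ p.1 = p.2)).card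
        = (n - 2) * (n - 3) := by omega
    exact this
  calc (n - 2) * (n - 3) = P.ncard := hPcard.symm
    _ = (g '' P).ncard := (Set.ncard_image_of_injOn hinj).symm
    _ ≤ Q2.ncard := Set.ncard_le_ncard himg (Set.toFinite _)

end Part2g
/-- A set of binary trees co-displayed in a binary tree-child network on `n` taxa has at most
`2(2n-3)(n-2)` distinct 3-subtrees; and this quadratic bound is asymptotically tight: there is
a binary tree-child network on `n` taxa displaying at least `(n-2)(n-3)` distinct 3-subtrees. -/
theorem stmt_17 :
    (∀ (V X : Type) [Fintype V] [Fintype X] (N : Net V X), N.IsBinaryNet → N.TreeChild →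
      ∀ (ι : Type) (VT : ι → Type) (Ts : ∀ i, Net (VT i) X),
        (∀ i, Finite (VT i)) → (∀ i, (Ts i).IsBinaryTree) → (∀ i, Display (Ts i) N) →
        {q : Sym2 X × X | ∃ a b, q.1 = s(a, b) ∧ ∃ i, (Ts i).Has3Subtree a b q.2}.ncard
          ≤ 2 * (2 * Fintype.card X - 3) * (Fintype.card X - 2)) ∧
    (∀ n : ℕ, 4 ≤ n → ∃ (V : Type) (_ : Fintype V) (N : Net V (Fin n)),
      N.IsBinaryNet ∧ N.TreeChild ∧
      (n - 2) * (n - 3) ≤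
        {q : Sym2 (Fin n) × Fin n |
          ∃ a b, q.1 = s(a, b) ∧ Displays3Subtree N a b q.2}.ncard) := by
  constructor
  · intro V X _ _ N hB hTC ι VT Ts hfin hbt hdisp
    exact part1_main N hB hTC ι VT Ts hfin hbt hdisp
  · intro n hn
    exact part2_main hn
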